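/- arXiv:1608.04530 — 2 statements merged into one kernel-verified Lean document; each statement's English description precedes it below -/
import Mathlib

section
/- A word s_{i_1} s_{i_2} ⋯ s_{i_k} in the letters s_1,…,s_n is a reduced expression of a fully commutative element of S_{n+1} if and only if for every i such that s_i occurs at least twice in the word, there is exactly one occurrence of s_{i−1} and exactly one occurrence of s_{i+1} between any two successive occurrences of s_i (where the letters s_0 and s_{n+1} do not exist, so in particular s_1 and s_n occur at most once in such a word). -/
namespace NCTL

/-- 0-indexed simple reflection: letter `i` (with `0 ≤ i < n`) stands for the simple
transposition `s_{i+1}` of the paper, i.e. the swap of the 0-indexed points `i` and `i+1`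
of `Fin (n+1)` (which represent the points `i+1` and `i+2` of `{1,…,n+1}`). -/
def simpleRefl (n : ℕ) (i : ℕ) : Equiv.Perm (Fin (n + 1)) :=
  if h : i < n then Equiv.swap ⟨i, by omega⟩ ⟨i + 1, by omega⟩ else 1

/-- The permutation represented by a word in the letters. -/
def wordProd (n : ℕ) (l : List ℕ) : Equiv.Perm (Fin (n + 1)) :=
  (l.map (simpleRefl n)).prod

/-- A valid word in the letters `0,…,n-1`. -/
def IsWord (n : ℕ) (l : List ℕ) : Prop := ∀ a ∈ l, a < n

/-- A standard Coxeter element: a product of all the simple reflections, each occurring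
exactly once, in some order. -/
def IsStdCox (n : ℕ) (c : Equiv.Perm (Fin (n + 1))) : Prop :=
  ∃ l : List ℕ, l.Perm (List.range n) ∧ wordProd n l = c

def IsTransposition {α : Type*} [DecidableEq α] (σ : Equiv.Perm α) : Prop :=
  ∃ a b, a ≠ b ∧ σ = Equiv.swap a b

/-- Reflection length: the minimal number of transpositions needed to write `w`. -/
noncomputable def reflLength (n : ℕ) (w : Equiv.Perm (Fin (n + 1))) : ℕ :=
  sInf {k | ∃ l : List (Equiv.Perm (Fin (n + 1))),
    l.length = k ∧ (∀ t ∈ l, IsTransposition t) ∧ l.prod = w}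

/-- The absolute order `u ≤_T v`. -/
def absLe (n : ℕ) (u v : Equiv.Perm (Fin (n + 1))) : Prop :=
  reflLength n u + reflLength n (u⁻¹ * v) = reflLength n v

/-- The set of noncrossing partitions `NC(S_{n+1}, c)`. -/
def NC (n : ℕ) (c : Equiv.Perm (Fin (n + 1))) : Set (Equiv.Perm (Fin (n + 1))) :=
  {x | absLe n x c}

/-- A block of `x`: an orbit of `x` of cardinality at least 2 (recorded as a `Finset`). -/
def IsBlock (n : ℕ) (x : Equiv.Perm (Fin (n + 1))) (B : Finset (Fin (n + 1))) : Prop :=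
  ∃ a, x a ≠ a ∧ ∀ b, b ∈ B ↔ x.SameCycle a b

/-- `k` is the minimum of some block of `x`. -/
def IsBlockMin (n : ℕ) (x : Equiv.Perm (Fin (n + 1))) (k : Fin (n + 1)) : Prop :=
  ∃ B, IsBlock n x B ∧ k ∈ B ∧ ∀ j ∈ B, k ≤ j

/-- `k` is the maximum of some block of `x`. -/
def IsBlockMax (n : ℕ) (x : Equiv.Perm (Fin (n + 1))) (k : Fin (n + 1)) : Prop :=
  ∃ B, IsBlock n x B ∧ k ∈ B ∧ ∀ j ∈ B, j ≤ k

/-- `k` is nested in the block `B`: `k ∉ B` and `min B < k < max B`. -/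
def Nested (n : ℕ) (k : Fin (n + 1)) (B : Finset (Fin (n + 1))) : Prop :=
  k ∉ B ∧ (∃ a ∈ B, a < k) ∧ ∃ b ∈ B, k < b

open Classical in
/-- `D_x` : the support of `x` minus the set of minima of blocks of `x`. -/
noncomputable def Dset (n : ℕ) (x : Equiv.Perm (Fin (n + 1))) : Finset (Fin (n + 1)) :=
  x.support.filter fun k => ¬ IsBlockMin n x k

open Classical in
/-- `U_x` : the support of `x` minus the set of maxima of blocks of `x`. -/
noncomputable def Uset (n : ℕ) (x : Equiv.Perm (Fin (n + 1))) : Finset (Fin (n + 1)) :=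
  x.support.filter fun k => ¬ IsBlockMax n x k

/-- The set `I(n)` of pairs `(D, U)` with `|D| = |U|` and `d_i < u_i` for all `i`
(in the increasing enumerations). -/
def Iset (n : ℕ) : Set (Finset (Fin (n + 1)) × Finset (Fin (n + 1))) :=
  {p | ∃ h : p.1.card = p.2.card, ∀ i : Fin p.1.card,
    p.1.orderEmbOfFin rfl i < p.2.orderEmbOfFin h.symm i}

/-- `R_c = {c^m(1) : 0 ≤ m ≤ k₀}` where `k₀ ≥ 1` is minimal with `c^{k₀}(1) = n+1`
(0-indexed: `1 ↦ 0` and `n+1 ↦ Fin.last n`). -/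
def Rset (n : ℕ) (c : Equiv.Perm (Fin (n + 1))) : Set (Fin (n + 1)) :=
  {j | ∃ m : ℕ, (c ^ m) (0 : Fin (n + 1)) = j ∧
    ∀ m', 0 < m' → m' < m → (c ^ m') (0 : Fin (n + 1)) ≠ Fin.last n}

/-- `L_c = {1, n+1} ∪ ({1,…,n+1} \ R_c)` (0-indexed). -/
def Lset (n : ℕ) (c : Equiv.Perm (Fin (n + 1))) : Set (Fin (n + 1)) :=
  {0, Fin.last n} ∪ (Rset n c)ᶜ

open Classical in
/-- `M_x^c = D_x ∩ U_x ∩ L_c`. -/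
noncomputable def Mset (n : ℕ) (c x : Equiv.Perm (Fin (n + 1))) : Finset (Fin (n + 1)) :=
  (Dset n x ∩ Uset n x).filter fun k => k ∈ Lset n c

open Classical in
/-- `N_x^c` : indices in `L_c`, not in `supp(x)`, nested in at least one block of `x`. -/
noncomputable def Nnest (n : ℕ) (c x : Equiv.Perm (Fin (n + 1))) : Finset (Fin (n + 1)) :=
  Finset.univ.filter fun k =>
    k ∈ Lset n c ∧ k ∉ x.support ∧ ∃ B, IsBlock n x B ∧ Nested n k B

/-- `l` is a reduced expression of `w`. -/
def IsReduced (n : ℕ) (w : Equiv.Perm (Fin (n + 1))) (l : List ℕ) : Prop :=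
  IsWord n l ∧ wordProd n l = w ∧
    ∀ l', IsWord n l' → wordProd n l' = w → l.length ≤ l'.length

/-- A single commutation move `s_a s_b ↦ s_b s_a` (with `|a - b| ≥ 2`) on words. -/
def CommMove (l l' : List ℕ) : Prop :=
  ∃ (u v : List ℕ) (a b : ℕ), (a + 2 ≤ b ∨ b + 2 ≤ a) ∧
    l = u ++ a :: b :: v ∧ l' = u ++ b :: a :: v

/-- Fully commutative: any two reduced expressions are related by commutation moves. -/
def IsFC (n : ℕ) (w : Equiv.Perm (Fin (n + 1))) : Prop :=
  ∀ l l', IsReduced n w l → IsReduced n w l' → Relation.ReflTransGen CommMove l l'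

/-- `run i j = [i, i-1, …, j]` (for `j ≤ i`). -/
def run (i j : ℕ) : List ℕ := (List.range (i + 1 - j)).map fun t => i - t

/-- The word `(s_{i_1} ⋯ s_{j_1}) ⋯ (s_{i_k} ⋯ s_{j_k})` of normal-form shape. -/
def normalWord (k : ℕ) (i j : Fin k → ℕ) : List ℕ :=
  (List.ofFn fun m : Fin k => run (i m) (j m)).flatten

/-- The data `(k, i, j)` is the normal form of `w`. -/
def IsNormalFormOf (n : ℕ) (w : Equiv.Perm (Fin (n + 1))) (k : ℕ) (i j : Fin k → ℕ) : Prop :=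
  (∀ m, i m < n) ∧ (∀ m, j m ≤ i m) ∧ StrictMono i ∧ StrictMono j ∧
    IsReduced n w (normalWord k i j)

/-- A word of normal-form shape. -/
def NormalShape (n : ℕ) (l : List ℕ) : Prop :=
  ∃ (k : ℕ) (i j : Fin k → ℕ), (∀ m, i m < n) ∧ (∀ m, j m ≤ i m) ∧
    StrictMono i ∧ StrictMono j ∧ l = normalWord k i j

/-- `a ∈ I_w` (letters 0-indexed). -/
def memIset (n : ℕ) (w : Equiv.Perm (Fin (n + 1))) (a : ℕ) : Prop :=
  ∃ (k : ℕ) (i j : Fin k → ℕ), IsNormalFormOf n w k i j ∧ ∃ m, i m = a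

/-- `a ∈ J_w` (letters 0-indexed). -/
def memJset (n : ℕ) (w : Equiv.Perm (Fin (n + 1))) (a : ℕ) : Prop :=
  ∃ (k : ℕ) (i j : Fin k → ℕ), IsNormalFormOf n w k i j ∧ ∃ m, j m = a

/-- The characterizing property of the bijection `φ : NC(S_{n+1},c) → FC(S_{n+1})`. -/
def PhiCharOn (n : ℕ) (c : Equiv.Perm (Fin (n + 1)))
    (φ : Equiv.Perm (Fin (n + 1)) → Equiv.Perm (Fin (n + 1))) : Prop :=
  Set.BijOn φ (NC n c) {w | IsFC n w} ∧
  ∀ x ∈ NC n c, ∀ k : Fin (n + 1),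
    (memJset n (φ x) (k : ℕ) ↔
      (k ∈ Rset n c ∧ k ∈ Dset n x) ∨ (k ∈ Lset n c ∧ IsBlockMin n x k) ∨
      (k ∈ Lset n c ∧ k ∉ x.support ∧ ∃ B, IsBlock n x B ∧ Nested n k B)) ∧
    ((∃ a : ℕ, a + 1 = (k : ℕ) ∧ memIset n (φ x) a) ↔
      (k ∈ Rset n c ∧ k ∈ Uset n x) ∨ (k ∈ Lset n c ∧ IsBlockMax n x k) ∨
      (k ∈ Lset n c ∧ k ∉ x.support ∧ ∃ B, IsBlock n x B ∧ Nested n k B))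

/-- `(a,b)` is a bump of the block `B`. -/
def IsBump (n : ℕ) (a b : Fin (n + 1)) (B : Finset (Fin (n + 1))) : Prop :=
  a < b ∧ a ∈ B ∧ b ∈ B ∧ ∀ j ∈ B, ¬ (a < j ∧ j < b)

/-- `L` is a distinguished expression of the block `B` of `x`: it lists the bumps of `B`,
each exactly once, and its product (as transpositions) is the cycle of `x` on `B`. -/
def IsDistinguished (n : ℕ) (x : Equiv.Perm (Fin (n + 1))) (B : Finset (Fin (n + 1)))
    (L : List (Fin (n + 1) × Fin (n + 1))) : Prop :=
  L.Nodup ∧ (∀ p, p ∈ L ↔ IsBump n p.1 p.2 B) ∧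
    ∀ j, ((L.map fun p => Equiv.swap p.1 p.2).prod) j = if j ∈ B then x j else j

/-- The key ordering the blocks: the minimal `m ≥ 1` with `c^{-m}(n+1) = min B`. -/
noncomputable def blockKey (n : ℕ) (c : Equiv.Perm (Fin (n + 1)))
    (B : Finset (Fin (n + 1))) : ℕ :=
  sInf {m | 1 ≤ m ∧ ∃ b ∈ B, (∀ j ∈ B, b ≤ j) ∧ (c⁻¹ ^ m) (Fin.last n) = b}

/-- `L` encodes a standard form `m_x^c` of `x`: the list (in order) of the bumps whose
syllables, concatenated, give the standard form; the blocks are taken in increasing order,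
and a distinguished expression is used inside each block. -/
def IsStdFormData (n : ℕ) (c x : Equiv.Perm (Fin (n + 1)))
    (L : List (Fin (n + 1) × Fin (n + 1))) : Prop :=
  ∃ (Bs : List (Finset (Fin (n + 1)))) (Ls : List (List (Fin (n + 1) × Fin (n + 1)))),
    Bs.Nodup ∧ (∀ B, B ∈ Bs ↔ IsBlock n x B) ∧
    Bs.Chain' (fun B B' => blockKey n c B < blockKey n c B') ∧
    List.Forall₂ (IsDistinguished n x) Bs Ls ∧
    L = Ls.flatten

/-- The syllable of the transposition `(a, b)` (0-indexed points, `a < b`):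
the word `s_{b-1} ⋯ s_{a+1} s_a s_{a+1} ⋯ s_{b-1}` in 0-indexed letters. -/
def syllable (a b : ℕ) : List ℕ := run (b - 1) a ++ (run (b - 1) (a + 1)).reverse

/-- The word of the standard form encoded by `L` (concatenation of the syllables). -/
def stdWord (n : ℕ) (L : List (Fin (n + 1) × Fin (n + 1))) : List ℕ :=
  (L.map fun p => syllable (p.1 : ℕ) (p.2 : ℕ)).flatten

/-- The letter `t` is a center of (a syllable of) the standard form encoded by `L`. -/
def IsCenterOf (n : ℕ) (L : List (Fin (n + 1) × Fin (n + 1))) (t : ℕ) : Prop :=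
  ∃ p ∈ L, (p.1 : ℕ) = t

/-- The letter `t` occurs in the syllable of the bump `p`. -/
def occursIn (n : ℕ) (p : Fin (n + 1) × Fin (n + 1)) (t : ℕ) : Prop :=
  (p.1 : ℕ) ≤ t ∧ t < (p.2 : ℕ)

/-- The selection rule for the extracted word `w_x^c`: the letter `t` is taken from the
right part of the syllables in which it occurs twice. -/
def selRight (n : ℕ) (c : Equiv.Perm (Fin (n + 1)))
    (L : List (Fin (n + 1) × Fin (n + 1))) (t : ℕ) : Prop :=
  (IsCenterOf n L t ∧ ∃ h : t < n + 1, (⟨t, h⟩ : Fin (n + 1)) ∈ Rset n c) ∨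
  (¬ IsCenterOf n L t ∧ ∃ h : t < n + 1, (⟨t, h⟩ : Fin (n + 1)) ∈ Lset n c)

open Classical in
/-- The subword extracted from a single syllable: the center is kept, and any letter
occurring twice is kept from the left or right part according to `sel`. -/
noncomputable def extractSyllable (sel : ℕ → Prop) (a b : ℕ) : List ℕ :=
  (run (b - 1) a).filter (fun t => decide (t = a ∨ ¬ sel t)) ++
  ((run (b - 1) (a + 1)).reverse).filter fun t => decide (sel t)

/-- The extracted word `w_x^c`. -/
noncomputable def extractWord (n : ℕ) (c : Equiv.Perm (Fin (n + 1)))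
    (L : List (Fin (n + 1) × Fin (n + 1))) : List ℕ :=
  (L.map fun p => extractSyllable (selRight n c L) (p.1 : ℕ) (p.2 : ℕ)).flatten

/-!
A reduced word of a permutation is a word of length `invCount`, and Matsumoto's theorem holds:
two reduced words of the same permutation are connected by commutation and braid moves.
Hence `l` is a reduced word of a fully commutative element iff no word in the commutation class
of `l` contains a factor `a a` (it would not be reduced) or `a b a` with `|a - b| = 1` (its braid
move would leave the commutation class, since it changes the number of letters `a`).

For such a class, sliding letters past commuting ones shows that between two successive
occurrences of `a` lie at least two letters `a ± 1`; climbing up, resp. down, through the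
letters then shows that there is exactly one `a + 1` and exactly one `a - 1`. Conversely this
condition says that for every pair `{a, a + 1}` the subword on these two letters alternates (and
that `0` occurs at most once); commutation moves never swap two such letters, so this is an
invariant of the commutation class, and it excludes the factors `a a` and `a b a`.
-/

open List Relation

section SimpleReflections

variable {n : ℕ}

lemma simpleRefl_of_lt {a : ℕ} (h : a < n) :
    simpleRefl n a = Equiv.swap ⟨a, by omega⟩ ⟨a + 1, by omega⟩ := dif_pos h

lemma simpleRefl_of_not_lt {a : ℕ} (h : ¬ a < n) : simpleRefl n a = 1 := dif_neg h

@[simp] lemma simpleRefl_mul_self (a : ℕ) : simpleRefl n a * simpleRefl n a = 1 := by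
  unfold simpleRefl
  split <;> simp

@[simp] lemma simpleRefl_mul_simpleRefl_mul (a : ℕ) (w : Equiv.Perm (Fin (n + 1))) :
    simpleRefl n a * (simpleRefl n a * w) = w := by
  rw [← mul_assoc, simpleRefl_mul_self, one_mul]

@[simp] lemma simpleRefl_inv (a : ℕ) : (simpleRefl n a)⁻¹ = simpleRefl n a :=
  inv_eq_of_mul_eq_one_left (simpleRefl_mul_self a)

lemma simpleRefl_mul_comm {a b : ℕ} (h : a + 2 ≤ b ∨ b + 2 ≤ a) :
    simpleRefl n a * simpleRefl n b = simpleRefl n b * simpleRefl n a := by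
  by_cases ha : a < n
  · by_cases hb : b < n
    · rw [simpleRefl_of_lt ha, simpleRefl_of_lt hb]
      exact (Equiv.Perm.disjoint_swap_swap (by simp [Fin.ext_iff]; omega)).commute
    · simp [simpleRefl_of_not_lt hb]
  · simp [simpleRefl_of_not_lt ha]

lemma swap_braid {α : Type*} [DecidableEq α] {i j k : α} (hij : i ≠ j)
    (hjk : j ≠ k) (hik : i ≠ k) :
    Equiv.swap i j * Equiv.swap j k * Equiv.swap i j
      = Equiv.swap j k * Equiv.swap i j * Equiv.swap j k := calc
  _ = Equiv.swap j i * Equiv.swap k j * Equiv.swap j i := by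
    rw [Equiv.swap_comm i j, Equiv.swap_comm j k]
  _ = Equiv.swap k i := by
    rw [Equiv.swap_mul_swap_mul_swap hjk.symm hik.symm, Equiv.swap_comm]
  _ = _ := (Equiv.swap_mul_swap_mul_swap hij hik).symm

lemma simpleRefl_braid {a : ℕ} (h : a + 1 < n) :
    simpleRefl n a * simpleRefl n (a + 1) * simpleRefl n a
      = simpleRefl n (a + 1) * simpleRefl n a * simpleRefl n (a + 1) := by
  rw [simpleRefl_of_lt (by omega : a < n), simpleRefl_of_lt h]
  exact swap_braid (by simp) (by simp) (by simp [Fin.ext_iff]; omega)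

@[simp] lemma wordProd_nil : wordProd n [] = 1 := rfl

@[simp] lemma wordProd_cons (a : ℕ) (l : List ℕ) :
    wordProd n (a :: l) = simpleRefl n a * wordProd n l := by
  simp [wordProd]

@[simp] lemma wordProd_append (l l' : List ℕ) :
    wordProd n (l ++ l') = wordProd n l * wordProd n l' := by
  simp [wordProd]

end SimpleReflections

section Inversions

variable {n : ℕ}

def inversions (w : Equiv.Perm (Fin (n + 1))) : Finset (Fin (n + 1) × Fin (n + 1)) :=
  Finset.univ.filter fun p => p.1 < p.2 ∧ w p.2 < w p.1

def invCount (w : Equiv.Perm (Fin (n + 1))) : ℕ := (inversions w).card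

def IsLeftDescent (w : Equiv.Perm (Fin (n + 1))) (a : ℕ) : Prop :=
  ∃ h : a < n, w⁻¹ ⟨a + 1, by omega⟩ < w⁻¹ ⟨a, by omega⟩

@[simp] lemma invCount_one : invCount (1 : Equiv.Perm (Fin (n + 1))) = 0 := by
  rw [invCount, inversions, Finset.card_eq_zero, Finset.filter_eq_empty_iff]
  exact fun _ _ h => h.1.asymm h.2

lemma swap_succ_lt_swap_succ_iff {i j u v : Fin (n + 1)} (hij : (j : ℕ) = i + 1) :
    Equiv.swap i j u < Equiv.swap i j v ↔ (u < v ∧ ¬ (u = i ∧ v = j)) ∨ (u = j ∧ v = i) := by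
  simp only [Equiv.swap_apply_def]
  split_ifs <;> simp only [Fin.lt_def, Fin.ext_iff] at * <;> omega

lemma inversions_simpleRefl_mul {w : Equiv.Perm (Fin (n + 1))} {a : ℕ} (ha : a < n)
    (h : w⁻¹ ⟨a, by omega⟩ < w⁻¹ ⟨a + 1, by omega⟩) :
    inversions (simpleRefl n a * w)
      = insert (w⁻¹ ⟨a, by omega⟩, w⁻¹ ⟨a + 1, by omega⟩) (inversions w) := by
  ext ⟨x, y⟩
  simp only [inversions, Finset.mem_filter, Finset.mem_univ, true_and, Finset.mem_insert,
    Prod.mk.injEq, Equiv.Perm.mul_apply, simpleRefl_of_lt ha]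
  rw [swap_succ_lt_swap_succ_iff rfl, Equiv.Perm.eq_inv_iff_eq, Equiv.Perm.eq_inv_iff_eq]
  constructor
  · rintro ⟨hxy, ⟨hlt, -⟩ | ⟨hy, hx⟩⟩
    · exact Or.inr ⟨hxy, hlt⟩
    · exact Or.inl ⟨hx, hy⟩
  · rintro (⟨hx, hy⟩ | ⟨hxy, hlt⟩)
    · refine ⟨?_, Or.inr ⟨hy, hx⟩⟩
      rwa [Equiv.Perm.eq_inv_iff_eq.mpr hx, Equiv.Perm.eq_inv_iff_eq.mpr hy]
    · refine ⟨hxy, Or.inl ⟨hlt, fun ⟨hy, hx⟩ => ?_⟩⟩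
      rw [Equiv.Perm.eq_inv_iff_eq.mpr hx, Equiv.Perm.eq_inv_iff_eq.mpr hy] at hxy
      exact h.asymm hxy

@[simp] lemma simpleRefl_mul_inv_apply (w : Equiv.Perm (Fin (n + 1))) (a : ℕ)
    (x : Fin (n + 1)) : (simpleRefl n a * w)⁻¹ x = w⁻¹ (simpleRefl n a x) := by
  simp [mul_inv_rev]

lemma simpleRefl_apply_left {a : ℕ} (ha : a < n) :
    simpleRefl n a ⟨a, by omega⟩ = ⟨a + 1, by omega⟩ := by
  rw [simpleRefl_of_lt ha, Equiv.swap_apply_left]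

lemma simpleRefl_apply_right {a : ℕ} (ha : a < n) :
    simpleRefl n a ⟨a + 1, by omega⟩ = ⟨a, by omega⟩ := by
  rw [simpleRefl_of_lt ha, Equiv.swap_apply_right]

lemma simpleRefl_apply_of_ne {a b : ℕ} (hb : b ≤ n) (h₁ : b ≠ a) (h₂ : b ≠ a + 1) :
    simpleRefl n a ⟨b, by omega⟩ = ⟨b, by omega⟩ := by
  unfold simpleRefl
  split
  · exact Equiv.swap_apply_of_ne_of_ne (by simpa [Fin.ext_iff]) (by simpa [Fin.ext_iff])
  · rfl

lemma inv_apply_lt_inv_apply_succ_iff {w : Equiv.Perm (Fin (n + 1))} {a : ℕ} (ha : a < n) :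
    w⁻¹ ⟨a, by omega⟩ < w⁻¹ ⟨a + 1, by omega⟩ ↔ ¬ IsLeftDescent w a := by
  have hne : w⁻¹ ⟨a, by omega⟩ ≠ w⁻¹ ⟨a + 1, by omega⟩ :=
    w⁻¹.injective.ne (by simp [Fin.ext_iff])
  simp only [IsLeftDescent, ha, exists_true_left, not_lt]
  exact ⟨le_of_lt, fun h => lt_of_le_of_ne h hne⟩

lemma isLeftDescent_simpleRefl_mul_iff {w : Equiv.Perm (Fin (n + 1))} {a : ℕ} (ha : a < n) :
    IsLeftDescent (simpleRefl n a * w) a ↔ ¬ IsLeftDescent w a := by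
  rw [← inv_apply_lt_inv_apply_succ_iff ha, IsLeftDescent, exists_prop_of_true ha]
  simp [simpleRefl_apply_left ha, simpleRefl_apply_right ha]

lemma invCount_simpleRefl_mul_of_not_isLeftDescent {w : Equiv.Perm (Fin (n + 1))} {a : ℕ}
    (ha : a < n) (h : ¬ IsLeftDescent w a) :
    invCount (simpleRefl n a * w) = invCount w + 1 := by
  rw [invCount, inversions_simpleRefl_mul ha ((inv_apply_lt_inv_apply_succ_iff ha).mpr h),
    Finset.card_insert_of_notMem, invCount]
  simp [inversions]

lemma invCount_simpleRefl_mul_of_isLeftDescent {w : Equiv.Perm (Fin (n + 1))} {a : ℕ}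
    (h : IsLeftDescent w a) : invCount (simpleRefl n a * w) + 1 = invCount w := by
  have ha : a < n := h.1
  have := invCount_simpleRefl_mul_of_not_isLeftDescent ha
    ((isLeftDescent_simpleRefl_mul_iff (w := simpleRefl n a * w) ha).mp
      (by rwa [simpleRefl_mul_simpleRefl_mul]))
  rwa [simpleRefl_mul_simpleRefl_mul, eq_comm] at this

lemma invCount_simpleRefl_mul_le (w : Equiv.Perm (Fin (n + 1))) (a : ℕ) :
    invCount (simpleRefl n a * w) ≤ invCount w + 1 := by
  by_cases ha : a < n
  · by_cases h : IsLeftDescent w a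
    · have := invCount_simpleRefl_mul_of_isLeftDescent h
      omega
    · rw [invCount_simpleRefl_mul_of_not_isLeftDescent ha h]
  · simp [simpleRefl_of_not_lt ha]

lemma invCount_wordProd_le (l : List ℕ) : invCount (wordProd n l) ≤ l.length := by
  induction l with
  | nil => simp
  | cons a l ih =>
    have := invCount_simpleRefl_mul_le (wordProd n l) a
    simp only [wordProd_cons, length_cons]
    omega

lemma exists_isLeftDescent {w : Equiv.Perm (Fin (n + 1))} (hw : w ≠ 1) :
    ∃ a, IsLeftDescent w a := by
  by_contra! h
  have hmono : StrictMono (w⁻¹ : Equiv.Perm (Fin (n + 1))) :=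
    Fin.strictMono_iff_lt_succ.mpr fun i =>
      (inv_apply_lt_inv_apply_succ_iff i.isLt).mpr (h i)
  have : hmono.orderIsoOfSurjective _ w⁻¹.surjective = OrderIso.refl _ := Subsingleton.elim _ _
  exact hw (inv_eq_one.mp (Equiv.ext fun x => by simpa using DFunLike.congr_fun this x))

end Inversions

section Moves

def BraidMove (l l' : List ℕ) : Prop :=
  ∃ (u v : List ℕ) (a b : ℕ), (b = a + 1 ∨ a = b + 1) ∧
    l = u ++ a :: b :: a :: v ∧ l' = u ++ b :: a :: b :: v

def CommOrBraidMove (l l' : List ℕ) : Prop := CommMove l l' ∨ BraidMove l l'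

instance : Std.Symm CommMove where
  symm _ _ := fun ⟨u, v, a, b, hab, h, h'⟩ => ⟨u, v, b, a, hab.symm, h', h⟩

lemma BraidMove.symm {l l' : List ℕ} : BraidMove l l' → BraidMove l' l :=
  fun ⟨u, v, a, b, hab, h, h'⟩ => ⟨u, v, b, a, hab.symm, h', h⟩

lemma CommOrBraidMove.symm {l l' : List ℕ} : CommOrBraidMove l l' → CommOrBraidMove l' l :=
  Or.imp (Std.Symm.symm _ _) BraidMove.symm

lemma CommOrBraidMove.cons {l l' : List ℕ} (c : ℕ) :
    CommOrBraidMove l l' → CommOrBraidMove (c :: l) (c :: l') :=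
  Or.imp (fun ⟨u, v, a, b, hab, h, h'⟩ => ⟨c :: u, v, a, b, hab, by simp [h], by simp [h']⟩)
    (fun ⟨u, v, a, b, hab, h, h'⟩ => ⟨c :: u, v, a, b, hab, by simp [h], by simp [h']⟩)

lemma reflTransGen_commOrBraidMove_cons {l l' : List ℕ} (c : ℕ)
    (h : ReflTransGen CommOrBraidMove l l') : ReflTransGen CommOrBraidMove (c :: l) (c :: l') :=
  ReflTransGen.lift (c :: ·) (fun _ _ => CommOrBraidMove.cons c) _ _ h

lemma CommMove.perm {l l' : List ℕ} : CommMove l l' → l.Perm l' :=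
  fun ⟨u, v, a, b, _, h, h'⟩ => h ▸ h' ▸ (Perm.swap b a v).append_left u

lemma reflTransGen_commMove_perm {l l' : List ℕ} (h : ReflTransGen CommMove l l') :
    l.Perm l' := by
  induction h with
  | refl => rfl
  | tail _ hm ih => exact ih.trans hm.perm

end Moves

section ReducedWords

variable {n : ℕ}

@[simp] lemma isWord_nil : IsWord n [] := fun _ h => absurd h not_mem_nil

@[simp] lemma isWord_cons {a : ℕ} {l : List ℕ} : IsWord n (a :: l) ↔ a < n ∧ IsWord n l :=
  forall_mem_cons

@[simp] lemma isWord_append {l l' : List ℕ} : IsWord n (l ++ l') ↔ IsWord n l ∧ IsWord n l' :=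
  forall_mem_append

lemma exists_word_length_eq_invCount (w : Equiv.Perm (Fin (n + 1))) :
    ∃ l, IsWord n l ∧ wordProd n l = w ∧ l.length = invCount w := by
  induction hk : invCount w using Nat.strong_induction_on generalizing w with
  | _ k ih =>
    by_cases hw : w = 1
    · exact ⟨[], isWord_nil, by simp [hw], by simp [← hk, hw]⟩
    obtain ⟨a, ha⟩ := exists_isLeftDescent hw
    have hcount := invCount_simpleRefl_mul_of_isLeftDescent ha
    obtain ⟨l, hl, hprod, hlen⟩ := ih _ (by omega) (simpleRefl n a * w) rfl
    exact ⟨a :: l, isWord_cons.mpr ⟨ha.1, hl⟩, by simp [hprod], by simp [hlen]; omega⟩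

lemma isReduced_iff {w : Equiv.Perm (Fin (n + 1))} {l : List ℕ} :
    IsReduced n w l ↔ IsWord n l ∧ wordProd n l = w ∧ l.length = invCount w := by
  refine ⟨fun ⟨hl, hprod, hmin⟩ => ⟨hl, hprod, ?_⟩,
    fun ⟨hl, hprod, hlen⟩ => ⟨hl, hprod, fun l' _ hprod' => ?_⟩⟩
  · obtain ⟨l', hl', hprod', hlen'⟩ := exists_word_length_eq_invCount w
    have := hmin l' hl' hprod'
    have := hprod ▸ invCount_wordProd_le (n := n) l
    omega
  · have := hprod' ▸ invCount_wordProd_le (n := n) l'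
    omega

lemma IsReduced.length_eq {w : Equiv.Perm (Fin (n + 1))} {l : List ℕ} (h : IsReduced n w l) :
    l.length = invCount w :=
  (isReduced_iff.mp h).2.2

lemma isReduced_cons_iff {w : Equiv.Perm (Fin (n + 1))} {a : ℕ} {l : List ℕ} :
    IsReduced n w (a :: l) ↔ IsLeftDescent w a ∧ IsReduced n (simpleRefl n a * w) l := by
  simp only [isReduced_iff, isWord_cons, wordProd_cons, length_cons]
  constructor
  · rintro ⟨⟨ha, hl⟩, rfl, hlen⟩
    have hle := invCount_wordProd_le (n := n) l
    have hdesc : IsLeftDescent (simpleRefl n a * wordProd n l) a := by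
      by_contra hd
      have := invCount_simpleRefl_mul_of_not_isLeftDescent ha hd
      simp only [simpleRefl_mul_simpleRefl_mul] at this
      omega
    have := invCount_simpleRefl_mul_of_isLeftDescent hdesc
    simp only [simpleRefl_mul_simpleRefl_mul] at this
    exact ⟨hdesc, hl, by simp, by simp only [simpleRefl_mul_simpleRefl_mul]; omega⟩
  · rintro ⟨hdesc, hl, hprod, hlen⟩
    have := invCount_simpleRefl_mul_of_isLeftDescent hdesc
    exact ⟨⟨hdesc.1, hl⟩, by simp [hprod], by omega⟩

lemma exists_isReduced_cons {w : Equiv.Perm (Fin (n + 1))} {a : ℕ} (ha : IsLeftDescent w a) :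
    ∃ l, IsReduced n w (a :: l) := by
  obtain ⟨l, hl, hprod, hlen⟩ := exists_word_length_eq_invCount (simpleRefl n a * w)
  exact ⟨l, isReduced_cons_iff.mpr ⟨ha, isReduced_iff.mpr ⟨hl, hprod, hlen⟩⟩⟩

lemma IsReduced.commOrBraidMove {w : Equiv.Perm (Fin (n + 1))} {l l' : List ℕ}
    (h : IsReduced n w l) (hm : CommOrBraidMove l l') : IsReduced n w l' := by
  rw [isReduced_iff] at h ⊢
  obtain ⟨hl, rfl, hlen⟩ := h
  rcases hm with ⟨u, v, a, b, hab, rfl, rfl⟩ | ⟨u, v, a, b, hab, rfl, rfl⟩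
  · simp only [isWord_append, isWord_cons, wordProd_append, wordProd_cons, length_append,
      length_cons] at hl hlen ⊢
    refine ⟨by tauto, ?_, by omega⟩
    rw [← mul_assoc (simpleRefl n b), simpleRefl_mul_comm hab.symm, mul_assoc]
  · simp only [isWord_append, isWord_cons, wordProd_append, wordProd_cons, length_append,
      length_cons] at hl hlen ⊢
    refine ⟨by tauto, ?_, by omega⟩
    congr 1
    simp only [← mul_assoc]
    congr 1
    rcases hab with rfl | rfl
    · exact (simpleRefl_braid hl.2.2.1).symm
    · exact simpleRefl_braid hl.2.1

lemma IsReduced.reflTransGen_commOrBraidMove {w : Equiv.Perm (Fin (n + 1))} {l l' : List ℕ}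
    (h : IsReduced n w l) (hp : ReflTransGen CommOrBraidMove l l') : IsReduced n w l' := by
  induction hp with
  | refl => exact h
  | tail _ hm ih => exact ih.commOrBraidMove hm

end ReducedWords

section WordProperty

variable {n : ℕ}

lemma isLeftDescent_simpleRefl_mul_of_far {w : Equiv.Perm (Fin (n + 1))} {a b : ℕ}
    (hab : a + 2 ≤ b ∨ b + 2 ≤ a) (hb : IsLeftDescent w b) :
    IsLeftDescent (simpleRefl n a * w) b := by
  obtain ⟨hbn, hlt⟩ := hb
  refine ⟨hbn, ?_⟩
  rwa [simpleRefl_mul_inv_apply, simpleRefl_mul_inv_apply,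
    simpleRefl_apply_of_ne (by omega) (by omega) (by omega),
    simpleRefl_apply_of_ne (by omega) (by omega) (by omega)]

lemma isLeftDescent_simpleRefl_mul_succ {w : Equiv.Perm (Fin (n + 1))} {a : ℕ}
    (ha : IsLeftDescent w a) (hb : IsLeftDescent w (a + 1)) :
    IsLeftDescent (simpleRefl n a * w) (a + 1) := by
  obtain ⟨_, hlt⟩ := ha
  obtain ⟨hbn, hlt'⟩ := hb
  refine ⟨hbn, ?_⟩
  rw [simpleRefl_mul_inv_apply, simpleRefl_mul_inv_apply, simpleRefl_apply_right (by omega),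
    simpleRefl_apply_of_ne (by omega) (by omega) (by omega)]
  exact hlt'.trans hlt

lemma isLeftDescent_simpleRefl_succ_mul_simpleRefl_mul {w : Equiv.Perm (Fin (n + 1))} {a : ℕ}
    (hb : IsLeftDescent w (a + 1)) :
    IsLeftDescent (simpleRefl n (a + 1) * (simpleRefl n a * w)) a := by
  obtain ⟨hbn, hlt⟩ := hb
  refine ⟨by omega, ?_⟩
  rw [simpleRefl_mul_inv_apply, simpleRefl_mul_inv_apply, simpleRefl_mul_inv_apply,
    simpleRefl_mul_inv_apply, simpleRefl_apply_left hbn,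
    simpleRefl_apply_of_ne (b := a) (by omega) (by omega) (by omega),
    simpleRefl_apply_of_ne (b := a + 2) (by omega) (by omega) (by omega),
    simpleRefl_apply_left (by omega)]
  exact hlt

lemma exists_isReduced_cons_commOrBraidMove {w : Equiv.Perm (Fin (n + 1))} {a b : ℕ}
    (ha : IsLeftDescent w a) (hb : IsLeftDescent w b) (hab : a ≠ b) :
    ∃ m m', IsReduced n w (a :: m) ∧ IsReduced n w (b :: m') ∧
      CommOrBraidMove (a :: m) (b :: m') := by
  wlog hlt : a < b generalizing a b
  · obtain ⟨m, m', hm, hm', hmove⟩ := this hb ha hab.symm (by omega)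
    exact ⟨m', m, hm', hm, hmove.symm⟩
  rcases (by omega : b = a + 1 ∨ a + 2 ≤ b) with rfl | hfar
  · obtain ⟨k, hk⟩ := exists_isReduced_cons (isLeftDescent_simpleRefl_succ_mul_simpleRefl_mul hb)
    have hred : IsReduced n w (a :: (a + 1) :: a :: k) := isReduced_cons_iff.mpr
      ⟨ha, isReduced_cons_iff.mpr ⟨isLeftDescent_simpleRefl_mul_succ ha hb, hk⟩⟩
    have hmove : CommOrBraidMove (a :: (a + 1) :: a :: k) ((a + 1) :: a :: (a + 1) :: k) :=
      Or.inr ⟨[], k, a, a + 1, Or.inl rfl, rfl, rfl⟩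
    exact ⟨_, _, hred, hred.commOrBraidMove hmove, hmove⟩
  · obtain ⟨k, hk⟩ := exists_isReduced_cons (isLeftDescent_simpleRefl_mul_of_far (Or.inl hfar) hb)
    have hred : IsReduced n w (a :: b :: k) := isReduced_cons_iff.mpr ⟨ha, hk⟩
    have hmove : CommOrBraidMove (a :: b :: k) (b :: a :: k) :=
      Or.inl ⟨[], k, a, b, Or.inl hfar, rfl, rfl⟩
    exact ⟨_, _, hred, hred.commOrBraidMove hmove, hmove⟩

/-- Matsumoto's theorem for `S_{n+1}`. -/
theorem reflTransGen_commOrBraidMove_of_isReduced {w : Equiv.Perm (Fin (n + 1))}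
    {l l' : List ℕ} (hl : IsReduced n w l) (hl' : IsReduced n w l') :
    ReflTransGen CommOrBraidMove l l' := by
  obtain ⟨k, hk⟩ : ∃ k, l.length = k := ⟨_, rfl⟩
  have hk' : l'.length = k := by rw [hl'.length_eq, ← hl.length_eq, hk]
  induction k generalizing w l l' with
  | zero => rw [length_eq_zero_iff.mp hk, length_eq_zero_iff.mp hk']
  | succ k ih =>
    obtain ⟨a, l, rfl⟩ := exists_cons_of_length_eq_add_one hk
    obtain ⟨b, l', rfl⟩ := exists_cons_of_length_eq_add_one hk'
    rw [length_cons, Nat.add_right_cancel_iff] at hk hk'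
    rw [isReduced_cons_iff] at hl hl'
    by_cases hab : a = b
    · subst hab
      exact reflTransGen_commOrBraidMove_cons a (ih hl.2 hl'.2 hk hk')
    obtain ⟨m, m', hm, hm', hmove⟩ := exists_isReduced_cons_commOrBraidMove hl.1 hl'.1 hab
    rw [isReduced_cons_iff] at hm hm'
    have hmk : m.length = k := by rw [hm.2.length_eq, ← hl.2.length_eq, hk]
    have hmk' : m'.length = k := by rw [hm'.2.length_eq, ← hl'.2.length_eq, hk']
    exact ((reflTransGen_commOrBraidMove_cons a (ih hl.2 hm.2 hk hmk)).tail hmove).trans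
      (reflTransGen_commOrBraidMove_cons b (ih hm'.2 hl'.2 hmk' hk'))

theorem exists_square_of_not_isReduced {l : List ℕ} (hl : IsWord n l)
    (hred : ¬ IsReduced n (wordProd n l) l) :
    ∃ l', ReflTransGen CommOrBraidMove l l' ∧ ∃ c, [c, c] <:+: l' := by
  induction l with
  | nil => exact absurd (isReduced_iff.mpr ⟨hl, rfl, by simp⟩) hred
  | cons a m ih =>
    rw [isWord_cons] at hl
    by_cases hm : IsReduced n (wordProd n m) m
    · have hdesc : IsLeftDescent (wordProd n m) a := by
        by_contra hd
        refine hred (isReduced_cons_iff.mpr ⟨?_, ?_⟩)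
        · rwa [wordProd_cons, isLeftDescent_simpleRefl_mul_iff hl.1]
        · rwa [wordProd_cons, simpleRefl_mul_simpleRefl_mul]
      obtain ⟨m₁, hm₁⟩ := exists_isReduced_cons hdesc
      exact ⟨a :: a :: m₁, reflTransGen_commOrBraidMove_cons a
        (reflTransGen_commOrBraidMove_of_isReduced hm hm₁), a, ⟨[], m₁, rfl⟩⟩
    · obtain ⟨l', hp, c, hc⟩ := ih hl.2 hm
      exact ⟨a :: l', reflTransGen_commOrBraidMove_cons a hp, c, infix_cons hc⟩

end WordProperty

section Lists

lemma countP_succ_eq_or_eq_succ (m : List ℕ) (a : ℕ) :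
    (m.countP fun c => c + 1 = a ∨ c = a + 1) = m.countP (· + 1 = a) + m.count (a + 1) := by
  induction m with
  | nil => rfl
  | cons c m ih =>
    simp only [countP_cons, count_cons, ih, decide_eq_true_eq, beq_iff_eq]
    split_ifs <;> omega

lemma countP_add_one_eq_count (m : List ℕ) (b : ℕ) : m.countP (· + 1 = b + 1) = m.count b := by
  rw [count_eq_countP]
  exact countP_congr fun c _ => by simp

lemma exists_eq_append_cons_append_cons_of_two_le_count {α : Type*} [BEq α] [LawfulBEq α]
    {m : List α} {c : α}
    (h : 2 ≤ m.count c) : ∃ m₁ m₂ m₃, m = m₁ ++ c :: (m₂ ++ c :: m₃) ∧ c ∉ m₂ := by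
  obtain ⟨k, hk⟩ : ∃ k, m.count c = k + 2 := ⟨_, (Nat.sub_add_cancel h).symm⟩
  have hf := filter_beq (l := m) c
  rw [hk, replicate_succ, replicate_succ] at hf
  obtain ⟨m₁, t, rfl, -, -, ht⟩ := filter_eq_cons_iff.mp hf
  obtain ⟨m₂, m₃, rfl, hm₂, -, -⟩ := filter_eq_cons_iff.mp ht
  exact ⟨m₁, m₂, m₃, rfl, fun hc => by simpa using hm₂ c hc⟩

lemma exists_eq_append_cons_append_cons_of_infix_filter {α : Type*} {p : α → Bool}
    {l : List α} {x y : α} (h : [x, y] <:+: l.filter p) :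
    ∃ u m v, l = u ++ x :: (m ++ y :: v) ∧ ∀ c ∈ m, ¬ p c := by
  obtain ⟨s, t, hst⟩ := h
  rw [append_assoc, eq_comm] at hst
  obtain ⟨l₁, l₂, rfl, -, h₂⟩ := filter_eq_append_iff.mp hst
  obtain ⟨k₁, k₂, rfl, -, -, hk₂⟩ := filter_eq_cons_iff.mp h₂
  obtain ⟨m, v, rfl, hm, -, -⟩ := filter_eq_cons_iff.mp hk₂
  exact ⟨l₁ ++ k₁, m, v, by simp, hm⟩

lemma existsUnique_and_exists_add_one_eq_iff {P : ℕ → Prop} {Q : ℕ → ℕ → Prop} {a : ℕ} :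
    (∃! r, P r ∧ ∃ b, b + 1 = a ∧ Q r b) ↔ ∃ b, b + 1 = a ∧ ∃! r, P r ∧ Q r b := by
  cases a <;> simp

end Lists

section Positions

lemma existsUnique_iff_existsUnique_add {P : ℕ → Prop} {k : ℕ} (h : ∀ r, P r → k ≤ r) :
    (∃! r, P r) ↔ ∃! j, P (j + k) := by
  constructor
  · rintro ⟨r, hr, hu⟩
    refine ⟨r - k, by beta_reduce; rwa [Nat.sub_add_cancel (h r hr)], fun j hj => ?_⟩
    have := hu _ hj
    omega
  · rintro ⟨j, hj, hu⟩
    refine ⟨j + k, hj, fun r hr => ?_⟩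
    have := h r hr
    have := hu (r - k) (by beta_reduce; rwa [Nat.sub_add_cancel (h r hr)])
    omega

lemma existsUnique_getElem?_eq_iff {α : Type*} [BEq α] [LawfulBEq α] {m : List α} {c : α} :
    (∃! j : ℕ, m[j]? = some c) ↔ m.count c = 1 := by
  induction m with
  | nil => simp
  | cons d m ih =>
    by_cases hd : d = c
    · subst hd
      rw [count_cons_self, Nat.add_eq_right, count_eq_zero, mem_iff_getElem?, not_exists]
      constructor
      · rintro ⟨j, -, hu⟩ i hi
        have h₀ := hu 0 rfl
        have h₁ := hu (i + 1) hi
        omega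
      · exact fun h => ⟨0, rfl, fun j hj => by cases j <;> simp_all⟩
    · rw [count_cons_of_ne hd, ← ih,
        existsUnique_iff_existsUnique_add (k := 1) fun r hr => ?_]
      · simp
      · cases r <;> simp_all

lemma getElem?_append_cons_add {α : Type*} (u w : List α) (a : α) (j : ℕ) :
    (u ++ a :: w)[j + (u.length + 1)]? = w[j]? := by
  rw [getElem?_append_right (by omega), show j + (u.length + 1) - u.length = j + 1 by omega,
    getElem?_cons_succ]

lemma exists_eq_append_cons_of_getElem? {α : Type*} {l : List α} {p : ℕ} {a : α}
    (h : l[p]? = some a) : ∃ u v, l = u ++ a :: v ∧ u.length = p := by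
  obtain ⟨hp, rfl⟩ := List.getElem?_eq_some_iff.mp h
  exact ⟨l.take p, l.drop (p + 1), by simp, length_take_of_le hp.le⟩

lemma exists_eq_append_cons_append_cons {α : Type*} {l : List α} {p q : ℕ} {a b : α}
    (hpq : p < q) (hp : l[p]? = some a) (hq : l[q]? = some b) :
    ∃ u m v, l = u ++ a :: (m ++ b :: v) ∧ u.length = p ∧ u.length + m.length + 1 = q := by
  obtain ⟨u, w, rfl, rfl⟩ := exists_eq_append_cons_of_getElem? hp
  rw [show q = q - (u.length + 1) + (u.length + 1) by omega, getElem?_append_cons_add] at hq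
  obtain ⟨m, v, rfl, hm⟩ := exists_eq_append_cons_of_getElem? hq
  exact ⟨u, m, v, rfl, rfl, by omega⟩

variable {u m v : List ℕ} {a b c : ℕ}

lemma getElem?_between {j : ℕ} (hj : j < m.length) :
    (u ++ a :: (m ++ b :: v))[j + (u.length + 1)]? = m[j]? := by
  rw [getElem?_append_cons_add, getElem?_append_left hj]

lemma forall_between_ne_iff :
    (∀ r, u.length < r → r < u.length + m.length + 1 → (u ++ a :: (m ++ b :: v))[r]? ≠ some c)
      ↔ c ∉ m := by
  rw [mem_iff_getElem?, not_exists]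
  constructor
  · intro h j hj
    have hjm := (List.getElem?_eq_some_iff.mp hj).1
    exact h (j + (u.length + 1)) (by omega) (by omega) (by rwa [getElem?_between hjm])
  · intro h r hr₁ hr₂ hr
    obtain ⟨j, rfl⟩ : ∃ j, r = j + (u.length + 1) := ⟨r - (u.length + 1), by omega⟩
    rw [getElem?_between (by omega)] at hr
    exact h j hr

lemma existsUnique_between_iff :
    (∃! r, (u.length < r ∧ r < u.length + m.length + 1) ∧ (u ++ a :: (m ++ b :: v))[r]? = some c)
      ↔ m.count c = 1 := by
  rw [existsUnique_iff_existsUnique_add (k := u.length + 1) fun r hr => hr.1.1,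
    ← existsUnique_getElem?_eq_iff]
  refine existsUnique_congr fun j => ⟨fun ⟨⟨_, hj⟩, h⟩ => ?_, fun h => ?_⟩
  · rwa [getElem?_between (by omega)] at h
  · have hj := (List.getElem?_eq_some_iff.mp h).1
    exact ⟨⟨by omega, by omega⟩, by rwa [getElem?_between hj]⟩

end Positions

section FullyCommutative

variable {n : ℕ}

def HasSquareOrBraid (l : List ℕ) : Prop :=
  ∃ a, [a, a] <:+: l ∨ ∃ b, (b = a + 1 ∨ a = b + 1) ∧ [a, b, a] <:+: l

def SquareBraidFree (l : List ℕ) : Prop :=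
  ∀ l', ReflTransGen CommMove l l' → ¬ HasSquareOrBraid l'

lemma SquareBraidFree.of_reflTransGen {l l' : List ℕ} (h : SquareBraidFree l)
    (hp : ReflTransGen CommMove l l') : SquareBraidFree l' :=
  fun l'' hp' => h l'' (hp.trans hp')

lemma BraidMove.hasSquareOrBraid {l l' : List ℕ} : BraidMove l l' → HasSquareOrBraid l :=
  fun ⟨u, v, a, b, hab, h, _⟩ => ⟨a, Or.inr ⟨b, hab, u, v, by simp [h]⟩⟩

lemma SquareBraidFree.reflTransGen_commMove {l l' : List ℕ} (h : SquareBraidFree l)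
    (hp : ReflTransGen CommOrBraidMove l l') : ReflTransGen CommMove l l' := by
  induction hp with
  | refl => rfl
  | tail _ hm ih => exact hm.elim ih.tail fun hb => absurd hb.hasSquareOrBraid (h _ ih)

lemma IsReduced.squareBraidFree {w : Equiv.Perm (Fin (n + 1))} {l : List ℕ} (hfc : IsFC n w)
    (hl : IsReduced n w l) : SquareBraidFree l := by
  intro l' hp hsq
  have hl' := hl.reflTransGen_commOrBraidMove (ReflTransGen.mono (fun _ _ => Or.inl) _ _ hp)
  rcases hsq with ⟨a, ⟨u, v, rfl⟩ | ⟨b, hab, u, v, rfl⟩⟩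
  · have hw := hl'.1
    simp only [isWord_append, isWord_cons] at hw
    have hshort := hl'.2.2 (u ++ v) (isWord_append.mpr ⟨hw.1.1, hw.2⟩) (by simp [← hl'.2.1])
    simp at hshort
  · have hmove : BraidMove (u ++ [a, b, a] ++ v) (u ++ [b, a, b] ++ v) :=
      ⟨u, v, a, b, hab, by simp, by simp⟩
    have h₁ := (reflTransGen_commMove_perm hp).count_eq a
    have h₂ := (reflTransGen_commMove_perm
      (hp.trans (hfc _ _ hl' (hl'.commOrBraidMove (Or.inr hmove))))).count_eq a
    have hba : b ≠ a := by omega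
    simp [hba] at h₁ h₂
    omega

lemma SquareBraidFree.isReduced {l : List ℕ} (h : SquareBraidFree l) (hl : IsWord n l) :
    IsReduced n (wordProd n l) l := by
  by_contra hred
  obtain ⟨l', hp, c, hc⟩ := exists_square_of_not_isReduced hl hred
  exact h l' (h.reflTransGen_commMove hp) ⟨c, Or.inl hc⟩

lemma SquareBraidFree.isFC {l : List ℕ} (h : SquareBraidFree l) (hl : IsWord n l) :
    IsFC n (wordProd n l) := by
  intro l₁ l₂ h₁ h₂
  have h₁' := h.of_reflTransGen (h.reflTransGen_commMove
    (reflTransGen_commOrBraidMove_of_isReduced (h.isReduced hl) h₁))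
  exact h₁'.reflTransGen_commMove (reflTransGen_commOrBraidMove_of_isReduced h₁ h₂)

end FullyCommutative

section Separation

def AdjSeparated (l : List ℕ) : Prop :=
  ∀ u a m v, l = u ++ a :: (m ++ a :: v) → a ∉ m →
    2 ≤ m.countP fun c => c + 1 = a ∨ c = a + 1

def AdjInterleaved (l : List ℕ) : Prop :=
  ∀ u a m v, l = u ++ a :: (m ++ a :: v) → a ∉ m →
    m.count (a + 1) = 1 ∧ ∃ b, b + 1 = a ∧ m.count b = 1

lemma reflTransGen_commMove_append_cons {a : ℕ} {m : List ℕ}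
    (hm : ∀ c ∈ m, a + 2 ≤ c ∨ c + 2 ≤ a) (u w : List ℕ) :
    ReflTransGen CommMove (u ++ a :: (m ++ w)) (u ++ m ++ a :: w) := by
  induction m generalizing u with
  | nil => simp [ReflTransGen.refl]
  | cons c m ih =>
    have hmove : CommMove (u ++ a :: (c :: m ++ w)) ((u ++ [c]) ++ a :: (m ++ w)) :=
      ⟨u, m ++ w, a, c, hm c mem_cons_self, by simp, by simp⟩
    simpa using (ReflTransGen.single hmove).trans
      (ih (fun d hd => hm d (mem_cons_of_mem c hd)) (u ++ [c]))

lemma SquareBraidFree.adjSeparated {l : List ℕ} (h : SquareBraidFree l) : AdjSeparated l := by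
  rintro u a m v rfl ham
  by_contra! hlt
  have hfar : ∀ c ∈ m, ¬ (c + 1 = a ∨ c = a + 1) → a + 2 ≤ c ∨ c + 2 ≤ a := fun c hc hc' => by
    have : c ≠ a := fun h => ham (h ▸ hc)
    omega
  rw [countP_eq_length_filter, Nat.lt_succ_iff, Nat.le_one_iff_eq_zero_or_eq_one,
    length_eq_zero_iff, length_eq_one_iff] at hlt
  rcases hlt with hnil | ⟨b, hb⟩
  · rw [filter_eq_nil_iff] at hnil
    refine h _ (reflTransGen_commMove_append_cons (fun c hc => hfar c hc ?_) u (a :: v))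
      ⟨a, Or.inl ⟨u ++ m, v, by simp⟩⟩
    simpa using hnil c hc
  · obtain ⟨m₁, m₂, rfl, hm₁, hab, hm₂⟩ := filter_eq_cons_iff.mp hb
    rw [filter_eq_nil_iff] at hm₂
    simp only [decide_eq_true_eq] at hm₁ hm₂ hab
    have hpath : ReflTransGen CommMove (u ++ a :: (m₁ ++ b :: m₂ ++ a :: v))
        (u ++ m₁ ++ [a, b, a] ++ (m₂ ++ v)) := by
      have h₁ := reflTransGen_commMove_append_cons (m := m₁)
        (fun c hc => hfar c (by simp [hc]) (hm₁ c hc)) u (b :: (m₂ ++ a :: v))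
      have h₂ := reflTransGen_commMove_append_cons (m := m₂)
        (fun c hc => hfar c (by simp [hc]) (hm₂ c hc)) (u ++ m₁ ++ [a, b]) v
      simp only [append_assoc, cons_append, nil_append] at h₁ h₂ ⊢
      exact h₁.trans (Std.Symm.symm _ _ h₂)
    exact h _ hpath ⟨a, Or.inr ⟨b, by omega, infix_append _ _ _⟩⟩

/-- Two letters `a + 1` between successive `a`s would force two letters `a + 2` between
successive `a + 1`s, and so on past the largest letter. -/
lemma AdjSeparated.count_succ_le_one {n : ℕ} {l : List ℕ} (hs : AdjSeparated l)
    (hl : IsWord n l) {u m v : List ℕ} {a : ℕ} (h : l = u ++ a :: (m ++ a :: v)) (ham : a ∉ m) :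
    m.count (a + 1) ≤ 1 := by
  by_contra! h2
  obtain ⟨m₁, m₂, m₃, rfl, hm₂⟩ := exists_eq_append_cons_append_cons_of_two_le_count h2
  have ha : a + 1 < n := hl _ (by simp [h])
  have h' : l = (u ++ a :: m₁) ++ (a + 1) :: (m₂ ++ (a + 1) :: (m₃ ++ a :: v)) := by simp [h]
  have hsep := hs _ _ _ _ h' hm₂
  have hrec := hs.count_succ_le_one hl h' hm₂
  have ha₂ : m₂.count a = 0 := count_eq_zero.mpr fun hx => ham (by simp [hx])
  rw [countP_succ_eq_or_eq_succ, countP_add_one_eq_count] at hsep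
  omega
termination_by n - a

/-- The same descent as in `AdjSeparated.count_succ_le_one`, downwards to the letter `0`. -/
lemma AdjSeparated.count_le_one_of_add_one_eq {l : List ℕ} (hs : AdjSeparated l)
    {u m v : List ℕ} {a b : ℕ} (h : l = u ++ a :: (m ++ a :: v)) (ham : a ∉ m) (hb : b + 1 = a) :
    m.count b ≤ 1 := by
  by_contra! h2
  obtain ⟨m₁, m₂, m₃, rfl, hm₂⟩ := exists_eq_append_cons_append_cons_of_two_le_count h2
  have h' : l = (u ++ a :: m₁) ++ b :: (m₂ ++ b :: (m₃ ++ a :: v)) := by simp [h]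
  have hsep := hs _ _ _ _ h' hm₂
  have hb₂ : m₂.count (b + 1) = 0 := count_eq_zero.mpr fun hx => ham (by simp [← hb, hx])
  rw [countP_succ_eq_or_eq_succ] at hsep
  cases b with
  | zero => simp at hsep hb₂; omega
  | succ c =>
    rw [countP_add_one_eq_count] at hsep
    have := hs.count_le_one_of_add_one_eq h' hm₂ rfl
    omega
termination_by a

lemma AdjSeparated.adjInterleaved {n : ℕ} {l : List ℕ} (hs : AdjSeparated l) (hl : IsWord n l) :
    AdjInterleaved l := by
  intro u a m v h ham
  have hsep := hs u a m v h ham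
  have hup := hs.count_succ_le_one hl h ham
  rw [countP_succ_eq_or_eq_succ] at hsep
  cases a with
  | zero => simp at hsep hup; omega
  | succ b =>
    rw [countP_add_one_eq_count] at hsep
    have := hs.count_le_one_of_add_one_eq h ham rfl
    exact ⟨by omega, b, rfl, by omega⟩

end Separation

section Alternation

/-- The condition on `count 0` stands for the pair `{-1, 0}`, whose letter `-1` never occurs. -/
def PairAlternating (l : List ℕ) : Prop :=
  (∀ a x, ¬ [x, x] <:+: l.filter fun c => c = a ∨ c = a + 1) ∧ l.count 0 ≤ 1

lemma AdjInterleaved.pairAlternating {l : List ℕ} (h : AdjInterleaved l) : PairAlternating l := by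
  refine ⟨fun a x hx => ?_, ?_⟩
  · have hxa : x = a ∨ x = a + 1 := by
      simpa using (mem_filter.mp (hx.subset mem_cons_self)).2
    obtain ⟨u, m, v, rfl, hm⟩ := exists_eq_append_cons_append_cons_of_infix_filter hx
    simp only [decide_eq_true_eq, not_or] at hm
    rcases hxa with rfl | rfl
    · have := (h _ _ _ _ rfl fun hx => (hm _ hx).1 rfl).1
      rw [count_eq_zero.mpr fun hx => (hm _ hx).2 rfl] at this
      exact absurd this (by norm_num)
    · obtain ⟨b, hb, hcount⟩ := (h _ _ _ _ rfl fun hx => (hm _ hx).2 rfl).2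
      obtain rfl : b = a := by omega
      rw [count_eq_zero.mpr fun hx => (hm _ hx).1 rfl] at hcount
      exact absurd hcount (by norm_num)
  · by_contra! h2
    obtain ⟨m₁, m₂, m₃, rfl, hm₂⟩ := exists_eq_append_cons_append_cons_of_two_le_count h2
    obtain ⟨b, hb, -⟩ := (h _ _ _ _ rfl hm₂).2
    omega

lemma CommMove.filter_eq {l l' : List ℕ} (h : CommMove l l') (a : ℕ) :
    (l.filter fun c => c = a ∨ c = a + 1) = l'.filter fun c => c = a ∨ c = a + 1 := by
  obtain ⟨u, v, x, y, hxy, rfl, rfl⟩ := h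
  simp only [filter_append, filter_cons, decide_eq_true_eq]
  split_ifs <;> first | rfl | omega

lemma PairAlternating.commMove {l l' : List ℕ} (h : PairAlternating l) (hm : CommMove l l') :
    PairAlternating l' :=
  ⟨fun a => hm.filter_eq a ▸ h.1 a, hm.perm.count_eq 0 ▸ h.2⟩

lemma PairAlternating.not_hasSquareOrBraid {l : List ℕ} (h : PairAlternating l) :
    ¬ HasSquareOrBraid l := by
  rintro ⟨a, hsq | ⟨b, rfl | rfl, hbr⟩⟩
  · exact h.1 a a (by simpa using hsq.filter fun c => decide (c = a ∨ c = a + 1))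
  · cases a with
    | zero =>
      have := hbr.sublist.count_le 0
      simp at this
      linarith [h.2]
    | succ a =>
      have hne : a + 1 + 1 ≠ a := by omega
      exact h.1 a (a + 1)
        (by simpa [filter_cons, hne] using hbr.filter fun c => decide (c = a ∨ c = a + 1))
  · have hne : b ≠ b + 1 + 1 := by omega
    exact h.1 (b + 1) (b + 1)
      (by simpa [filter_cons, hne] using hbr.filter fun c => decide (c = b + 1 ∨ c = b + 1 + 1))

lemma PairAlternating.squareBraidFree {l : List ℕ} (h : PairAlternating l) :
    SquareBraidFree l := by
  intro l' hp
  suffices PairAlternating l' from this.not_hasSquareOrBraid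
  induction hp with
  | refl => exact h
  | tail _ hm ih => exact ih.commMove hm

end Alternation

lemma adjInterleaved_iff {l : List ℕ} :
    AdjInterleaved l ↔ ∀ a p q : ℕ, p < q → l[p]? = some a → l[q]? = some a →
      (∀ r, p < r → r < q → l[r]? ≠ some a) →
      ((∃! r : ℕ, (p < r ∧ r < q) ∧ l[r]? = some (a + 1)) ∧
        (∃! r : ℕ, (p < r ∧ r < q) ∧ ∃ b, b + 1 = a ∧ l[r]? = some b)) := by
  simp only [existsUnique_and_exists_add_one_eq_iff]
  constructor
  · intro h a p q hpq hp hq hno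
    obtain ⟨u, m, v, rfl, rfl, rfl⟩ := exists_eq_append_cons_append_cons hpq hp hq
    rw [forall_between_ne_iff] at hno
    obtain ⟨h₁, b, hb, h₂⟩ := h u a m v rfl hno
    exact ⟨existsUnique_between_iff.mpr h₁, b, hb, existsUnique_between_iff.mpr h₂⟩
  · rintro h u a m v rfl ham
    obtain ⟨h₁, b, hb, h₂⟩ := h a u.length (u.length + m.length + 1) (by omega)
      (by simp) (by rw [show u.length + m.length + 1 = m.length + (u.length + 1) by omega,
        getElem?_append_cons_add]; simp)
      (forall_between_ne_iff.mpr ham)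
    exact ⟨existsUnique_between_iff.mp h₁, b, hb, existsUnique_between_iff.mp h₂⟩

theorem statement_9_general (n : ℕ) (l : List ℕ) (hl : IsWord n l) :
    (∃ w, IsFC n w ∧ IsReduced n w l) ↔
      ∀ a p q : ℕ, p < q → l[p]? = some a → l[q]? = some a →
        (∀ r, p < r → r < q → l[r]? ≠ some a) →
        ((∃! r : ℕ, (p < r ∧ r < q) ∧ l[r]? = some (a + 1)) ∧
         (∃! r : ℕ, (p < r ∧ r < q) ∧ ∃ b, b + 1 = a ∧ l[r]? = some b)) := by
  rw [← adjInterleaved_iff]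
  constructor
  · rintro ⟨w, hfc, hred⟩
    exact (hred.squareBraidFree hfc).adjSeparated.adjInterleaved hl
  · intro h
    have hfree := h.pairAlternating.squareBraidFree
    exact ⟨wordProd n l, hfree.isFC hl, hfree.isReduced hl⟩

/-- a word is a reduced expression of a fully commutative element iff
between any two successive occurrences of a letter `s_i` there is exactly one occurrence
of `s_{i-1}` and exactly one occurrence of `s_{i+1}` (0-indexed letters; the letter
`s_{i-1}` is encoded by `∃ b, b + 1 = a`, which fails for the lowest letter). -/
theorem statement_9 (n : ℕ) (hn : 1 ≤ n) (l : List ℕ) (hl : IsWord n l) :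
    (∃ w, IsFC n w ∧ IsReduced n w l) ↔
      ∀ a p q : ℕ, p < q → l[p]? = some a → l[q]? = some a →
        (∀ r, p < r → r < q → l[r]? ≠ some a) →
        ((∃! r : ℕ, (p < r ∧ r < q) ∧ l[r]? = some (a + 1)) ∧
         (∃! r : ℕ, (p < r ∧ r < q) ∧ ∃ b, b + 1 = a ∧ l[r]? = some b)) :=
  statement_9_general n l hl

end NCTL
end

section
/- Let c be a standard Coxeter element of S_{n+1}, x ∈ NC(S_{n+1}, c), and let m_x^c = w_1 w_2 ⋯ w_ℓ be a standard form of x with syllables w_1,…,w_ℓ. Then: (1) if k and k+1 both lie in R_c, or both lie in L_c, and s_k is the center of the syllable w_i and occurs at the top of the syllable w_j, then i = j and w_i is the single-letter syllable s_k; (2) if (k ∈ L_c and k+1 ∈ R_c) or (k ∈ R_c and k+1 ∈ L_c), and the syllable w_i is the single letter s_k, then s_k does not occur in any syllable w_j with j ≠ i, and the letter s_{k+1} occurs at most once in m_x^c. -/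
/-!
Since `c` is a product of distinct simple reflections, the `c`-orbit of `1` climbs through `R_c`
up to `n + 1` and then descends through `L_c` back to `1`. So, for `p < q`, `p` comes before `q` in
the cyclic order of `c` exactly when `p ∈ R_c`.

Every `x ≤_T c` is noncrossing for this cyclic order. Relabelling the points along the orbit turns
`c` into the rotation `m ↦ m + 1`; then `x = c t₁ ⋯ t_m` for a factorisation of `c⁻¹ x` into
`m = ℓ_T(x⁻¹ c)` transpositions, and by counting cycles each `tᵢ` must split a cycle of the
current permutation. Splitting a permutation whose cycles are cyclically increasing and
noncrossing at two points `a < b` of one cycle `C` gives the cycles `C ∩ (a, b]` and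
`C \ (a, b]`, again cyclically increasing and noncrossing.

Both claims then follow from the noncrossing property. If `k` and `k + 1` lie on the same side,
bumps `(a, k + 1)` and `(k, b)` of different blocks would cross; if they lie on different sides,
the bump `(k, k + 1)` would cross any bump of another block straddling it.
-/

section

open Finset

namespace Equiv.Perm

section SameCycle

variable {α : Type*}

lemma SameCycle.of_apply_closed [Finite α] {v : Perm α} {P : α → Prop}
    (hP : ∀ z, P z → P (v z)) {x y : α} (hx : P x) (h : v.SameCycle x y) : P y := by
  obtain ⟨k, rfl⟩ := h.exists_nat_pow_eq
  clear h
  induction k with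
  | zero => exact hx
  | succ k ih => rw [pow_succ', mul_apply]; exact hP _ ih

lemma SameCycle.of_forall_sameCycle_apply [Finite α] {v v' : Perm α}
    (h : ∀ z, v'.SameCycle z (v z)) {x y : α} (hxy : v.SameCycle x y) : v'.SameCycle x y :=
  hxy.of_apply_closed (P := v'.SameCycle x) (fun z hz => hz.trans (h z)) SameCycle.rfl

lemma sameCycle_inv_mul_mul {f g : Perm α} {x y : α} :
    (g⁻¹ * f * g).SameCycle x y ↔ f.SameCycle (g x) (g y) := by
  simpa using sameCycle_conj (g := g⁻¹) (f := f) (x := x) (y := y)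

variable [DecidableEq α]

lemma sameCycle_swap_apply {w : Perm α} {a b : α} (h : w.SameCycle a b) (z : α) :
    w.SameCycle z (swap a b z) := by
  rcases eq_or_ne z a with rfl | hza
  · simpa using h
  rcases eq_or_ne z b with rfl | hzb
  · simpa using h.symm
  rw [swap_apply_of_ne_of_ne hza hzb]

lemma sameCycle_mul_swap_apply {v : Perm α} {a b : α} (hab : v.SameCycle a b) (z : α) :
    v.SameCycle z ((v * swap a b) z) :=
  (sameCycle_swap_apply hab z).trans (sameCycle_apply_right.2 SameCycle.rfl)

variable [Finite α]

lemma SameCycle.of_mul_swap {v : Perm α} {a b x y : α} (h : (v * swap a b).SameCycle x y)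
    (hab : v.SameCycle a b) : v.SameCycle x y :=
  SameCycle.of_forall_sameCycle_apply (sameCycle_mul_swap_apply hab) h

lemma sameCycle_mul_swap_iff_of_not_sameCycle {v : Perm α} {a b x : α}
    (hxa : ¬ v.SameCycle x a) (hxb : ¬ v.SameCycle x b) (y : α) :
    (v * swap a b).SameCycle x y ↔ v.SameCycle x y := by
  have hfix : ∀ z, v.SameCycle x z → (v * swap a b) z = v z := fun z hz => by
    rw [mul_apply, swap_apply_of_ne_of_ne (by rintro rfl; exact hxa hz)
      (by rintro rfl; exact hxb hz)]
  refine ⟨SameCycle.of_apply_closed (fun z hz => ?_) SameCycle.rfl, fun h =>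
    (SameCycle.of_apply_closed (P := fun z => v.SameCycle x z ∧ (v * swap a b).SameCycle x z)
      (fun z hz => ⟨?_, ?_⟩) ⟨SameCycle.rfl, SameCycle.rfl⟩ h).2⟩
  · rw [hfix z hz]
    exact hz.trans (sameCycle_apply_right.2 SameCycle.rfl)
  · exact hz.1.trans (sameCycle_apply_right.2 SameCycle.rfl)
  · rw [← hfix z hz.1]
    exact hz.2.trans (sameCycle_apply_right.2 SameCycle.rfl)

lemma sameCycle_mul_swap_of_not_sameCycle {v : Perm α} {a b : α} (hab : ¬ v.SameCycle a b) :
    (v * swap a b).SameCycle a b := by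
  classical
  have hex : ∃ k, 0 < k ∧ (v ^ k) b = b :=
    ⟨orderOf v, orderOf_pos v, by rw [pow_orderOf_eq_one]; rfl⟩
  -- until `v`'s cycle of `b` returns to `b`, the product follows it from `a`
  have key : ∀ k, 1 ≤ k → k ≤ Nat.find hex → ((v * swap a b) ^ k) a = (v ^ k) b := by
    intro k hk
    induction k, hk using Nat.le_induction with
    | base => simp
    | succ k hk ih =>
      intro hkfind
      have hb : (v ^ k) b ≠ b := fun h => Nat.find_min hex (by omega) ⟨by omega, h⟩
      have ha : (v ^ k) b ≠ a := fun h => hab (h ▸ sameCycle_pow_right.2 SameCycle.rfl).symm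
      rw [pow_succ', mul_apply, ih (by omega), mul_apply, swap_apply_of_ne_of_ne ha hb,
        pow_succ', mul_apply]
  exact ⟨Nat.find hex, by
    rw [zpow_natCast, key _ (Nat.find_spec hex).1 le_rfl, (Nat.find_spec hex).2]⟩

lemma sameCycle_mul_swap_or {v : Perm α} {a b x : α} (hx : v.SameCycle a x) :
    (v * swap a b).SameCycle x a ∨ (v * swap a b).SameCycle x b := by
  refine SameCycle.of_apply_closed
    (P := fun z => (v * swap a b).SameCycle z a ∨ (v * swap a b).SameCycle z b)
    (fun z hz => ?_) (Or.inl SameCycle.rfl) hx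
  have hstep : (v * swap a b).SameCycle (swap a b z) (v z) := by
    simpa using sameCycle_apply_right.2 (SameCycle.rfl (f := v * swap a b) (x := swap a b z))
  rcases eq_or_ne z a with rfl | hza
  · simpa using Or.inr hstep.symm
  rcases eq_or_ne z b with rfl | hzb
  · simpa using Or.inl hstep.symm
  rw [swap_apply_of_ne_of_ne hza hzb] at hstep
  exact hz.imp hstep.symm.trans hstep.symm.trans

end SameCycle

section NumCycles

variable {β : Type*} [Fintype β] [LinearOrder β]

def cycleMin (v : Perm β) (a : β) : β :=
  (univ.filter (v.SameCycle a)).min' ⟨a, mem_filter.2 ⟨mem_univ _, SameCycle.rfl⟩⟩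

lemma sameCycle_cycleMin (v : Perm β) (a : β) : v.SameCycle a (cycleMin v a) :=
  (mem_filter.1 ((univ.filter (v.SameCycle a)).min'_mem _)).2

lemma cycleMin_le {v : Perm β} {a b : β} (h : v.SameCycle a b) : cycleMin v a ≤ b :=
  min'_le _ _ (by simpa using h)

lemma cycleMin_congr {v : Perm β} {a b : β} (h : v.SameCycle a b) :
    cycleMin v a = cycleMin v b :=
  le_antisymm (cycleMin_le (h.trans (sameCycle_cycleMin v b)))
    (cycleMin_le (h.symm.trans (sameCycle_cycleMin v a)))

lemma cycleMin_eq_self_iff {v : Perm β} {a : β} :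
    cycleMin v a = a ↔ ∀ b, v.SameCycle a b → a ≤ b :=
  ⟨fun h _ hb => h ▸ cycleMin_le hb,
    fun h => le_antisymm (cycleMin_le SameCycle.rfl) (h _ (sameCycle_cycleMin v a))⟩

lemma cycleMin_cycleMin (v : Perm β) (a : β) : cycleMin v (cycleMin v a) = cycleMin v a :=
  (cycleMin_congr (sameCycle_cycleMin v a)).symm

def cycleMins (v : Perm β) : Finset β := univ.filter fun a => cycleMin v a = a

@[simp]
lemma mem_cycleMins {v : Perm β} {a : β} : a ∈ cycleMins v ↔ cycleMin v a = a := by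
  simp [cycleMins]

def numCycles (v : Perm β) : ℕ := #(cycleMins v)

lemma numCycles_one : numCycles (1 : Perm β) = Fintype.card β := by
  have : ∀ a : β, cycleMin 1 a = a := fun a =>
    cycleMin_eq_self_iff.2 fun b hb => (sameCycle_one.1 hb).le
  simp [numCycles, cycleMins, this]

lemma numCycles_pos [Nonempty β] (v : Perm β) : 0 < numCycles v :=
  card_pos.2 ⟨cycleMin v (Classical.arbitrary β), by simp [cycleMin_cycleMin]⟩

lemma numCycles_eq_one_of_forall_sameCycle [Nonempty β] {v : Perm β}
    (h : ∀ p q, v.SameCycle p q) : numCycles v = 1 := by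
  refine card_eq_one.2 ⟨cycleMin v (Classical.arbitrary β), ?_⟩
  ext x
  simp only [mem_cycleMins, mem_singleton]
  refine ⟨fun hx => ?_, fun hx => hx ▸ cycleMin_cycleMin v _⟩
  rw [← hx]
  exact cycleMin_congr (h _ _)

lemma sameCycle_of_numCycles_eq_one {v : Perm β} (h : numCycles v = 1) (p q : β) :
    v.SameCycle p q := by
  obtain ⟨z, hz⟩ := card_eq_one.1 h
  have hmin : ∀ a, cycleMin v a = z := fun a => by
    simpa [hz] using mem_cycleMins.2 (cycleMin_cycleMin v a)
  have := sameCycle_cycleMin v q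
  rw [hmin, ← hmin p] at this
  exact (sameCycle_cycleMin v p).trans this.symm

lemma numCycles_mul_swap_add_one_le {v : Perm β} {a b : β} (hab : ¬ v.SameCycle a b) :
    numCycles (v * swap a b) + 1 ≤ numCycles v := by
  set u := v * swap a b
  have hu : u.SameCycle a b := sameCycle_mul_swap_of_not_sameCycle hab
  have hv : v = u * swap a b := by simp [u, mul_assoc]
  have hmono : ∀ {x y}, v.SameCycle x y → u.SameCycle x y := fun h =>
    (hv ▸ h : (u * swap a b).SameCycle _ _).of_mul_swap hu
  -- the larger of the two old minima `cycleMin v a`, `cycleMin v b` is no longer a minimum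
  have key : ∀ p q, q ∈ cycleMins v → p < q → u.SameCycle p q →
      numCycles u + 1 ≤ numCycles v := by
    intro p q hq hpq hS
    have hsub : cycleMins u ⊆ (cycleMins v).erase q := by
      intro x hx
      rw [mem_cycleMins] at hx
      refine mem_erase.2 ⟨?_, mem_cycleMins.2 <| cycleMin_eq_self_iff.2 fun y hy =>
        cycleMin_eq_self_iff.1 hx y (hmono hy)⟩
      rintro rfl
      exact absurd (cycleMin_eq_self_iff.1 hx p hS.symm) (not_le.2 hpq)
    have := card_le_card hsub
    rw [card_erase_of_mem hq] at this
    have : 0 < numCycles v := card_pos.2 ⟨q, hq⟩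
    unfold numCycles at *
    omega
  have hS : u.SameCycle (cycleMin v a) (cycleMin v b) :=
    (hmono (sameCycle_cycleMin v a)).symm.trans (hu.trans (hmono (sameCycle_cycleMin v b)))
  have hne : cycleMin v a ≠ cycleMin v b := fun h =>
    hab ((sameCycle_cycleMin v a).trans (h ▸ (sameCycle_cycleMin v b).symm))
  rcases lt_or_gt_of_ne hne with h | h
  · exact key _ _ (by simp [cycleMin_cycleMin]) h hS
  · exact key _ _ (by simp [cycleMin_cycleMin]) h hS.symm

lemma numCycles_mul_swap_le {v : Perm β} {a b : β} (hab : v.SameCycle a b) :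
    numCycles (v * swap a b) ≤ numCycles v + 1 := by
  set u := v * swap a b
  -- the old cycle of `a` yields at most the two new minima `cycleMin u a` and `cycleMin u b`
  have hsub : cycleMins u ⊆
      insert (cycleMin u a) (insert (cycleMin u b) ((cycleMins v).erase (cycleMin v a))) := by
    intro x hx
    rw [mem_cycleMins] at hx
    simp only [mem_insert, mem_erase, mem_cycleMins]
    by_cases hxa : v.SameCycle a x
    · rcases sameCycle_mul_swap_or hxa with h | h
      · exact Or.inl (hx ▸ cycleMin_congr h)
      · exact Or.inr (Or.inl (hx ▸ cycleMin_congr h))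
    · have hxb : ¬ v.SameCycle x b := fun h => hxa (hab.trans h.symm)
      refine Or.inr (Or.inr ⟨fun h => hxa (h ▸ sameCycle_cycleMin v a), ?_⟩)
      exact cycleMin_eq_self_iff.2 fun y hy => cycleMin_eq_self_iff.1 hx y
        ((sameCycle_mul_swap_iff_of_not_sameCycle (fun h => hxa h.symm) hxb y).2 hy)
  have hmem : cycleMin v a ∈ cycleMins v := by simp [cycleMin_cycleMin]
  have := (card_le_card hsub).trans ((card_insert_le _ _).trans
    (Nat.succ_le_succ (card_insert_le _ _)))
  rw [card_erase_of_mem hmem] at this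
  have : 0 < numCycles v := card_pos.2 ⟨_, hmem⟩
  unfold numCycles at *
  omega

lemma numCycles_le_numCycles_mul_swap_add_one (v : Perm β) (a b : β) :
    numCycles v ≤ numCycles (v * swap a b) + 1 := by
  have hv : v * swap a b * swap a b = v := by simp [mul_assoc]
  by_cases h : (v * swap a b).SameCycle a b
  · simpa [hv] using numCycles_mul_swap_le h
  · have := numCycles_mul_swap_add_one_le h
    rw [hv] at this
    omega

lemma card_le_numCycles_prod_add_length (l : List (Perm β))
    (hl : ∀ t ∈ l, NCTL.IsTransposition t) : Fintype.card β ≤ numCycles l.prod + l.length := by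
  induction l using List.reverseRecOn with
  | nil => simp [numCycles_one]
  | append_singleton l t ih =>
    obtain ⟨a, b, -, rfl⟩ := hl t (by simp)
    have := numCycles_le_numCycles_mul_swap_add_one l.prod a b
    have := ih fun s hs => hl s (by simp [hs])
    simp only [List.prod_append, List.prod_singleton, List.length_append, List.length_singleton]
    omega

end NumCycles

section SwapLength

variable {β : Type*} [DecidableEq β]

noncomputable def swapLength (w : Perm β) : ℕ :=
  sInf {k | ∃ l : List (Perm β), l.length = k ∧ (∀ t ∈ l, NCTL.IsTransposition t) ∧ l.prod = w}

lemma exists_swapLength_eq [Fintype β] (w : Perm β) :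
    ∃ l : List (Perm β),
      l.length = swapLength w ∧ (∀ t ∈ l, NCTL.IsTransposition t) ∧ l.prod = w := by
  obtain ⟨l, hprod, hswap⟩ := (truncSwapFactors w).out
  exact Nat.sInf_mem (s := {k | ∃ l : List (Perm β), l.length = k ∧
    (∀ t ∈ l, NCTL.IsTransposition t) ∧ l.prod = w}) ⟨l.length, l, rfl, hswap, hprod⟩

lemma swapLength_prod_le (l : List (Perm β)) (hl : ∀ t ∈ l, NCTL.IsTransposition t) :
    swapLength l.prod ≤ l.length :=
  Nat.sInf_le ⟨l, rfl, hl, rfl⟩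

lemma swapLength_mul_le [Fintype β] (w u : Perm β) :
    swapLength (w * u) ≤ swapLength w + swapLength u := by
  obtain ⟨l₁, hl₁, hs₁, rfl⟩ := exists_swapLength_eq w
  obtain ⟨l₂, hl₂, hs₂, rfl⟩ := exists_swapLength_eq u
  rw [← hl₁, ← hl₂, ← List.length_append, ← List.prod_append]
  exact swapLength_prod_le _ fun t ht => (List.mem_append.1 ht).elim (hs₁ t) (hs₂ t)

lemma swapLength_le_one {t : Perm β} (ht : NCTL.IsTransposition t) : swapLength t ≤ 1 := by
  simpa using swapLength_prod_le [t] (by simpa using ht)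

lemma swapLength_inv_le [Fintype β] (w : Perm β) : swapLength w⁻¹ ≤ swapLength w := by
  obtain ⟨l, hl, hs, rfl⟩ := exists_swapLength_eq w
  -- transpositions are involutions, so the inverse is the reversed product
  have hinv : l.map (fun t => t⁻¹) = l := by
    conv_rhs => rw [← List.map_id l]
    refine List.map_congr_left fun t ht => ?_
    obtain ⟨a, b, -, rfl⟩ := hs t ht
    exact swap_inv a b
  rw [List.prod_inv_reverse, hinv, ← hl, ← List.length_reverse]
  exact swapLength_prod_le _ fun t ht => hs t (List.mem_reverse.1 ht)

lemma swapLength_inv [Fintype β] (w : Perm β) : swapLength w⁻¹ = swapLength w :=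
  le_antisymm (swapLength_inv_le w) (by simpa using swapLength_inv_le w⁻¹)

lemma swapLength_conj_le [Fintype β] (g w : Perm β) :
    swapLength (g * w * g⁻¹) ≤ swapLength w := by
  obtain ⟨l, hl, hs, rfl⟩ := exists_swapLength_eq w
  have hconj : g * l.prod * g⁻¹ = (l.map (MulAut.conj g)).prod := by
    rw [← map_list_prod]; rfl
  rw [hconj, ← hl, ← List.length_map (MulAut.conj g)]
  refine swapLength_prod_le _ fun t ht => ?_
  obtain ⟨s, hs', rfl⟩ := List.mem_map.1 ht
  obtain ⟨a, b, hab, rfl⟩ := hs s hs'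
  exact ⟨g a, g b, g.injective.ne hab, by rw [MulAut.conj_apply, swap_apply_apply]⟩

lemma swapLength_conj [Fintype β] (g w : Perm β) :
    swapLength (g * w * g⁻¹) = swapLength w := by
  refine le_antisymm (swapLength_conj_le g w) ?_
  simpa [mul_assoc] using swapLength_conj_le g⁻¹ (g * w * g⁻¹)

lemma card_le_numCycles_add_swapLength {γ : Type*} [Fintype γ] [LinearOrder γ] (w : Perm γ) :
    Fintype.card γ ≤ numCycles w + swapLength w := by
  obtain ⟨l, hl, hs, rfl⟩ := exists_swapLength_eq w
  exact hl ▸ card_le_numCycles_prod_add_length l hs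

end SwapLength

section Noncrossing

variable {β : Type*} [LinearOrder β]

/-- Strict betweenness for the cyclic order obtained by closing up the linear order of `β`. -/
def CycBetween (x y z : β) : Prop := (x < y ∧ y < z) ∨ (y < z ∧ z < x) ∨ (z < x ∧ x < y)

/-- `v z` is the cyclic successor of `z` within its cycle: every cycle of `v` runs through its
elements in increasing order and then returns to its minimum. -/
def IsAligned (v : Perm β) : Prop := ∀ z w, v.SameCycle z w → ¬ CycBetween z w (v z)

/-- No two cycles of `v` cross, for the order on `α` pulled back along `f`. -/
def IsNoncrossingAlong {α γ : Type*} [LinearOrder γ] (f : α → γ) (v : Perm α) : Prop :=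
  ∀ p q r s, f p < f q → f q < f r → f r < f s → v.SameCycle p r → v.SameCycle q s →
    v.SameCycle p q

abbrev IsNoncrossing (v : Perm β) : Prop := IsNoncrossingAlong id v

namespace IsAligned

variable {v : Perm β} {a b : β}

lemma mul_swap_mem_Ioc_iff (hv : IsAligned v) (hab : a < b) (hS : v.SameCycle a b) {z : β}
    (hz : v.SameCycle a z) :
    (a < (v * swap a b) z ∧ (v * swap a b) z ≤ b) ↔ (a < z ∧ z ≤ b) := by
  have hmoved : ∀ y, v.SameCycle a y → v y ≠ y := fun y hy hfix =>
    hab.ne ((hy.symm.eq_of_left hfix).symm.trans ((hy.symm.trans hS).eq_of_left hfix))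
  have hza := hv z a hz.symm
  have hzb := hv z b (hz.symm.trans hS)
  have hvz := hmoved z hz
  rw [mul_apply]
  unfold CycBetween at hza hzb
  rcases eq_or_ne z a with rfl | hza'
  · have hb := hv b z hS.symm
    have hvb := hmoved b hS
    unfold CycBetween at hb
    rw [swap_apply_left]; grind
  rcases eq_or_ne z b with rfl | hzb'
  · have ha := hv a z hS
    have hva := hmoved a SameCycle.rfl
    unfold CycBetween at ha
    rw [swap_apply_right]; grind
  rw [swap_apply_of_ne_of_ne hza' hzb']
  grind

/-- Within the cycle `C` of `a`, the cycles of `v * swap a b` are `C ∩ (a, b]` and the rest. -/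
lemma sameCycle_mul_swap_iff_of_sameCycle [Fintype β] (hv : IsAligned v) (hab : a < b)
    (hS : v.SameCycle a b) {x z : β} (hx : v.SameCycle a x) (hz : v.SameCycle a z) :
    (v * swap a b).SameCycle x z ↔ (a < x ∧ x ≤ b ↔ a < z ∧ z ≤ b) := by
  have closed : ∀ {x z}, v.SameCycle a x → (v * swap a b).SameCycle x z →
      (a < z ∧ z ≤ b ↔ a < x ∧ x ≤ b) := fun {x _} hx h =>
    (SameCycle.of_apply_closed
      (P := fun z => v.SameCycle a z ∧ (a < z ∧ z ≤ b ↔ a < x ∧ x ≤ b))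
        (fun z hz => ⟨hz.1.trans (sameCycle_mul_swap_apply hS z),
          (mul_swap_mem_Ioc_iff hv hab hS hz.1).trans hz.2⟩) ⟨hx, Iff.rfl⟩ h).2
  refine ⟨fun h => (closed hx h).symm, fun h => ?_⟩
  rcases sameCycle_mul_swap_or hx with hxa | hxb <;>
    rcases sameCycle_mul_swap_or hz with hza | hzb
  · exact hxa.trans hza.symm
  · have := closed (SameCycle.refl _ _) hxa.symm
    have := closed hS hzb.symm
    grind
  · have := closed hS hxb.symm
    have := closed (SameCycle.refl _ _) hza.symm
    grind
  · exact hxb.trans hzb.symm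

lemma mul_swap [Fintype β] (hv : IsAligned v) (hab : a < b) (hS : v.SameCycle a b) :
    IsAligned (v * swap a b) := by
  intro z w h
  have hzw := h.of_mul_swap hS
  rcases eq_or_ne z a with rfl | hza
  · have hw := (sameCycle_mul_swap_iff_of_sameCycle hv hab hS SameCycle.rfl hzw).1 h
    have hb := hv b w (hS.symm.trans hzw)
    unfold CycBetween at hb ⊢
    rw [mul_apply, swap_apply_left]
    grind
  rcases eq_or_ne z b with rfl | hzb
  · have hw := (sameCycle_mul_swap_iff_of_sameCycle hv hab hS hS (hS.trans hzw)).1 h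
    have ha := hv a w (hS.trans hzw)
    have hab' := (mul_swap_mem_Ioc_iff hv hab hS hS).2 ⟨hab, le_rfl⟩
    unfold CycBetween at ha ⊢
    rw [mul_apply, swap_apply_right] at hab' ⊢
    grind
  rw [mul_apply, swap_apply_of_ne_of_ne hza hzb]
  exact hv z w hzw

lemma isNoncrossing_mul_swap [Fintype β] (hv : IsAligned v) (hN : IsNoncrossing v) (hab : a < b)
    (hS : v.SameCycle a b) : IsNoncrossing (v * swap a b) := by
  intro p q r s hpq hqr hrs hpr hqs
  have hpq' := hN p q r s hpq hqr hrs (hpr.of_mul_swap hS) (hqs.of_mul_swap hS)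
  by_cases hp : v.SameCycle a p
  · have hq := hp.trans hpq'
    rw [sameCycle_mul_swap_iff_of_sameCycle hv hab hS hp (hp.trans (hpr.of_mul_swap hS))] at hpr
    rw [sameCycle_mul_swap_iff_of_sameCycle hv hab hS hq (hq.trans (hqs.of_mul_swap hS))] at hqs
    rw [sameCycle_mul_swap_iff_of_sameCycle hv hab hS hp hq]
    grind
  · exact (sameCycle_mul_swap_iff_of_not_sameCycle (fun h => hp h.symm)
      (fun h => hp (hS.trans h.symm)) q).2 hpq'

end IsAligned

lemma isNoncrossing_mul_prod [Fintype β] (l : List (Perm β))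
    (hl : ∀ t ∈ l, NCTL.IsTransposition t) {w : Perm β} (hA : IsAligned w) (hN : IsNoncrossing w)
    (hw : numCycles w + swapLength w = Fintype.card β)
    (hlen : swapLength (w * l.prod) + l.length ≤ swapLength w) : IsNoncrossing (w * l.prod) := by
  induction l generalizing w with
  | nil => simpa using hN
  | cons t l ih =>
    have hl' : ∀ s ∈ l, NCTL.IsTransposition s := fun s hs => hl s (List.mem_cons_of_mem _ hs)
    obtain ⟨a, b, hab, rfl⟩ := hl t List.mem_cons_self
    rw [List.prod_cons, ← mul_assoc, List.length_cons] at hlen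
    rw [List.prod_cons, ← mul_assoc]
    set u := w * swap a b
    -- each factor must lower the length by one, which forces it to split a cycle of `w`
    have hwu : swapLength w ≤ swapLength u + 1 := by
      calc swapLength w = swapLength (u * swap a b) := by simp [u, mul_assoc]
        _ ≤ swapLength u + 1 := by
          have := swapLength_le_one ⟨a, b, hab, rfl⟩
          have := swapLength_mul_le u (swap a b)
          omega
    have hul : swapLength u ≤ swapLength (u * l.prod) + l.length := by
      calc swapLength u = swapLength (u * l.prod * l.prod⁻¹) := by simp
        _ ≤ swapLength (u * l.prod) + swapLength l.prod⁻¹ := swapLength_mul_le _ _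
        _ ≤ swapLength (u * l.prod) + l.length := by
          rw [swapLength_inv]; have := swapLength_prod_le l hl'; omega
    have hcard := card_le_numCycles_add_swapLength u
    have hS : w.SameCycle a b := by
      by_contra hS
      have : numCycles u + 1 ≤ numCycles w := numCycles_mul_swap_add_one_le hS
      omega
    have hsplit : numCycles u ≤ numCycles w + 1 := numCycles_mul_swap_le hS
    obtain ⟨a', b', hlt, hsw, hS'⟩ :
        ∃ a' b', a' < b' ∧ swap a b = swap a' b' ∧ w.SameCycle a' b' := by
      rcases lt_or_gt_of_ne hab with h | h
      exacts [⟨a, b, h, rfl, hS⟩, ⟨b, a, h, swap_comm a b, hS.symm⟩]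
    have hu : u = w * swap a' b' := by rw [← hsw]
    refine ih hl' ?_ ?_ (by omega) (by omega)
    · exact hu ▸ hA.mul_swap hlt hS'
    · exact hu ▸ hA.isNoncrossing_mul_swap hN hlt hS'

lemma isAligned_finRotate (n : ℕ) : IsAligned (finRotate (n + 1)) := by
  intro z w _
  unfold CycBetween
  rcases eq_or_ne z (Fin.last n) with rfl | hz
  · simp [not_lt.2 (Fin.le_last w)]
  · simp only [Fin.lt_def, coe_finRotate_of_ne_last hz]
    omega

lemma IsNoncrossingAlong.of_lt_iff {α γ γ' : Type*} [LinearOrder γ] [LinearOrder γ']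
    {f : α → γ} {f' : α → γ'} {v : Perm α} (h : IsNoncrossingAlong f v)
    (hff' : ∀ a b, f' a < f' b ↔ f a < f b) : IsNoncrossingAlong f' v := by
  intro p q r s h1 h2 h3
  rw [hff'] at h1 h2 h3
  exact h p q r s h1 h2 h3

lemma IsNoncrossing.isNoncrossingAlong_inv {g x : Perm β} (h : IsNoncrossing (g⁻¹ * x * g)) :
    IsNoncrossingAlong ⇑g⁻¹ x := by
  intro p q r s h1 h2 h3 hpr hqs
  simpa [sameCycle_inv_mul_mul] using
    h _ _ _ _ h1 h2 h3 (by simpa [sameCycle_inv_mul_mul] using hpr)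
      (by simpa [sameCycle_inv_mul_mul] using hqs)

/-- Cyclic form of noncrossing: if `q` lies strictly between `p` and `r` and `s` lies outside,
the chords `{p, r}` and `{q, s}` cross. -/
lemma IsNoncrossingAlong.sameCycle_of_cross {α γ : Type*} [LinearOrder γ] {f : α → γ}
    {v : Perm α} (hv : IsNoncrossingAlong f v) {p q r s : α} (hpr : v.SameCycle p r)
    (hqs : v.SameCycle q s) (hq : f p < f q ∧ f q < f r ∨ f r < f q ∧ f q < f p)
    (hs : f s < f p ∧ f s < f r ∨ f p < f s ∧ f r < f s) : v.SameCycle p q := by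
  rcases hq with ⟨h1, h2⟩ | ⟨h1, h2⟩ <;> rcases hs with ⟨h3, h4⟩ | ⟨h3, h4⟩
  · exact (hv s p q r h3 h1 h2 hqs.symm hpr).symm.trans hqs.symm
  · exact hv p q r s h1 h2 h4 hpr hqs
  · exact hpr.trans ((hv s r q p h4 h1 h2 hqs.symm hpr.symm).symm.trans hqs.symm)
  · exact hpr.trans (hv r q p s h1 h2 h3 hpr.symm hqs)

theorem isNoncrossing_of_swapLength_add_eq [Fintype β] {c x : Perm β} (hA : IsAligned c)
    (hN : IsNoncrossing c) (hc : numCycles c + swapLength c = Fintype.card β)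
    (hx : swapLength x + swapLength (x⁻¹ * c) = swapLength c) : IsNoncrossing x := by
  obtain ⟨l, hl, hs, hprod⟩ := exists_swapLength_eq (c⁻¹ * x)
  have hxl : x = c * l.prod := by rw [hprod, mul_inv_cancel_left]
  have hinv : swapLength (c⁻¹ * x) = swapLength (x⁻¹ * c) := by
    rw [← swapLength_inv, mul_inv_rev, inv_inv]
  refine hxl ▸ isNoncrossing_mul_prod l hs hA hN hc ?_
  rw [← hxl, hl, hinv]
  omega

end Noncrossing

end Equiv.Perm

end

namespace NCTL

section CoxeterWords

def applyLetter (a x : ℕ) : ℕ := if x = a then a + 1 else if x = a + 1 then a else x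

def applyWord (l : List ℕ) (x : ℕ) : ℕ := l.foldr applyLetter x

lemma applyWord_cons (a : ℕ) (l : List ℕ) (x : ℕ) :
    applyWord (a :: l) x = applyLetter a (applyWord l x) := rfl

lemma applyWord_append_cons (u w : List ℕ) (a x : ℕ) :
    applyWord (u ++ a :: w) x = applyWord u (applyLetter a (applyWord w x)) := by
  simp [applyWord, List.foldr_append]

/-- Only the letter `e` moves points across the gap between `e` and `e + 1`. -/
lemma applyWord_le_iff {l : List ℕ} {e : ℕ} (h : e ∉ l) (x : ℕ) :
    applyWord l x ≤ e ↔ x ≤ e := by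
  induction l with
  | nil => rfl
  | cons a l ih =>
    rw [List.mem_cons, not_or] at h
    have : applyLetter a (applyWord l x) ≤ e ↔ applyWord l x ≤ e := by
      unfold applyLetter; split_ifs <;> omega
    exact this.trans (ih h.2)

lemma applyWord_eq_self {l : List ℕ} {p : ℕ} (h : ∀ a ∈ l, a ≠ p ∧ a + 1 ≠ p) :
    applyWord l p = p := by
  induction l with
  | nil => rfl
  | cons a l ih =>
    have ha := h a List.mem_cons_self
    rw [applyWord_cons, ih fun b hb => h b (List.mem_cons_of_mem _ hb)]
    unfold applyLetter; split_ifs <;> omega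

lemma applyWord_le {l : List ℕ} {n : ℕ} (h : ∀ a ∈ l, a < n) {x : ℕ} (hx : x ≤ n) :
    applyWord l x ≤ n := by
  induction l with
  | nil => exact hx
  | cons a l ih =>
    have := ih fun b hb => h b (List.mem_cons_of_mem _ hb)
    have := h a List.mem_cons_self
    rw [applyWord_cons]
    unfold applyLetter; split_ifs <;> omega

lemma lt_applyWord_self {u w : List ℕ} {p : ℕ} (hu : p ∉ u)
    (hw : ∀ a ∈ w, a ≠ p ∧ a + 1 ≠ p) : p < applyWord (u ++ p :: w) p := by
  rw [applyWord_append_cons, applyWord_eq_self hw, ← not_le, applyWord_le_iff hu]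
  simp [applyLetter]

lemma applyWord_lt_self {u w : List ℕ} {p : ℕ} (hp : 0 < p) (hu : p - 1 ∉ u)
    (hw : ∀ a ∈ w, a ≠ p ∧ a + 1 ≠ p) : applyWord (u ++ (p - 1) :: w) p < p := by
  rw [applyWord_append_cons, applyWord_eq_self hw]
  have : applyWord u (applyLetter (p - 1) p) ≤ p - 1 := by
    rw [applyWord_le_iff hu]; unfold applyLetter; split_ifs <;> omega
  omega

variable {n : ℕ} {l : List ℕ}

/-- In a Coxeter word, an ascent `j < c j` is followed by an ascent, unless it reaches the top. -/
lemma applyWord_lt_applyWord_applyWord (hnd : l.Nodup) (hmem : ∀ a, a ∈ l ↔ a < n) {j : ℕ}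
    (hjn : j ≤ n) (h1 : j < applyWord l j) (h2 : applyWord l j ≠ n) :
    applyWord l j < applyWord l (applyWord l j) := by
  generalize hr : applyWord l j = r at h1 h2 ⊢
  have hrn : r < n := lt_of_le_of_ne (hr ▸ applyWord_le (fun a ha => (hmem a).1 ha) hjn) h2
  -- the letter `r - 1` is the last one to move `j`, from `r - 1` to `r`
  obtain ⟨u, w, rfl⟩ := List.append_of_mem ((hmem (r - 1)).2 (by omega))
  have hnd' := hnd
  simp only [List.nodup_append, List.nodup_cons, List.mem_cons] at hnd'
  obtain ⟨hndu, ⟨hw1, -⟩, hdisj⟩ := hnd'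
  have hu1 : r - 1 ∉ u := fun h => hdisj _ h _ (Or.inl rfl) rfl
  have hwj : applyWord w j = r - 1 := by
    have hle := (applyWord_le_iff hw1 j).2 (by omega)
    by_contra hne
    have : applyLetter (r - 1) (applyWord w j) ≤ r - 1 := by
      unfold applyLetter; split_ifs <;> omega
    rw [← applyWord_le_iff hu1, ← applyWord_append_cons, hr] at this
    omega
  have hur : applyWord u r = r := by
    rw [applyWord_append_cons, hwj] at hr
    simpa [applyLetter, show r - 1 + 1 = r by omega] using hr
  -- and `r` itself cannot be a letter of `u`, otherwise `u` would lift `r`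
  have hru : r ∉ u := by
    intro hru
    obtain ⟨u1, u2, rfl⟩ := List.append_of_mem hru
    simp only [List.nodup_append, List.nodup_cons] at hndu
    have := lt_applyWord_self (p := r) (u := u1) (w := u2)
      (fun h => hndu.2.2 _ h _ List.mem_cons_self rfl)
      (fun a ha => ⟨fun h => hndu.2.1.1 (h ▸ ha), fun h => hu1 (by simp [ha, ← h])⟩)
    omega
  have hrw : r ∈ w := by
    have := (hmem r).2 hrn
    simp only [List.mem_append, List.mem_cons] at this
    rcases this with h | h | h
    exacts [absurd h hru, by omega, h]
  -- so `r` occurs to the right of `r - 1`, and nothing to its right moves `r` first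
  obtain ⟨w1, w2, rfl⟩ := List.append_of_mem hrw
  have hnd2 : ((u ++ (r - 1) :: w1) ++ r :: w2).Nodup := by simpa using hnd
  simp only [List.nodup_append, List.nodup_cons] at hnd2
  have := lt_applyWord_self (p := r) (u := u ++ (r - 1) :: w1) (w := w2)
    (fun h => hnd2.2.2 _ h _ List.mem_cons_self rfl)
    (fun a ha => ⟨fun h => hnd2.2.1.1 (h ▸ ha),
      fun h => hnd2.2.2 (r - 1) (by simp) a (List.mem_cons_of_mem _ ha) (by omega)⟩)
  simpa using this

/-- In a Coxeter word, a descent `c j < j` is followed by a descent, unless it reaches `0`. -/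
lemma applyWord_applyWord_lt_applyWord (hnd : l.Nodup) (hmem : ∀ a, a ∈ l ↔ a < n) {j : ℕ}
    (hjn : j ≤ n) (h1 : applyWord l j < j) (h2 : applyWord l j ≠ 0) :
    applyWord l (applyWord l j) < applyWord l j := by
  generalize hd : applyWord l j = d at h1 h2 ⊢
  -- the letter `d` is the last one to move `j`, from `d + 1` to `d`
  obtain ⟨u, w, rfl⟩ := List.append_of_mem ((hmem d).2 (by omega))
  have hnd' := hnd
  simp only [List.nodup_append, List.nodup_cons, List.mem_cons] at hnd'
  obtain ⟨hndu, ⟨hw1, -⟩, hdisj⟩ := hnd'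
  have hu1 : d ∉ u := fun h => hdisj _ h _ (Or.inl rfl) rfl
  have hwj : applyWord w j = d + 1 := by
    have hgt : ¬ applyWord w j ≤ d := by rw [applyWord_le_iff hw1]; omega
    by_contra hne
    have : ¬ applyLetter d (applyWord w j) ≤ d := by
      unfold applyLetter; split_ifs <;> omega
    rw [← applyWord_le_iff hu1, ← applyWord_append_cons, hd] at this
    omega
  have hud : applyWord u d = d := by
    rw [applyWord_append_cons, hwj] at hd
    simpa [applyLetter] using hd
  -- and `d - 1` cannot be a letter of `u`, otherwise `u` would lower `d`
  have hdu : d - 1 ∉ u := by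
    intro hdu
    obtain ⟨u1, u2, rfl⟩ := List.append_of_mem hdu
    simp only [List.nodup_append, List.nodup_cons] at hndu
    have := applyWord_lt_self (p := d) (u := u1) (w := u2) (by omega)
      (fun h => hndu.2.2 _ h _ List.mem_cons_self rfl)
      (fun a ha => ⟨fun h => hu1 (by simp [ha, ← h]),
        fun h => hndu.2.1.1 (by rwa [show d - 1 = a by omega])⟩)
    omega
  have hdw : d - 1 ∈ w := by
    have := (hmem (d - 1)).2 (by omega)
    simp only [List.mem_append, List.mem_cons] at this
    rcases this with h | h | h
    exacts [absurd h hdu, by omega, h]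
  obtain ⟨w1, w2, rfl⟩ := List.append_of_mem hdw
  have hnd2 : ((u ++ d :: w1) ++ (d - 1) :: w2).Nodup := by simpa using hnd
  simp only [List.nodup_append, List.nodup_cons] at hnd2
  have := applyWord_lt_self (p := d) (u := u ++ d :: w1) (w := w2) (by omega)
    (fun h => hnd2.2.2 _ h _ List.mem_cons_self rfl)
    (fun a ha => ⟨fun h => hnd2.2.2 d (by simp) a (List.mem_cons_of_mem _ ha) h.symm,
      fun h => hnd2.2.1.1 (by rwa [show d - 1 = a by omega])⟩)
  simpa using this

end CoxeterWords

section CoxeterElement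

open Equiv Equiv.Perm

variable {n : ℕ}

lemma simpleRefl_val {a : ℕ} (ha : a < n) (u : Fin (n + 1)) :
    (simpleRefl n a u : ℕ) = applyLetter a u := by
  rw [simpleRefl, dif_pos ha, swap_apply_def, applyLetter]
  split_ifs <;> simp_all [Fin.ext_iff]

lemma wordProd_val {l : List ℕ} (hl : IsWord n l) (u : Fin (n + 1)) :
    (wordProd n l u : ℕ) = applyWord l u := by
  induction l with
  | nil => rfl
  | cons a l ih =>
    rw [wordProd, List.map_cons, List.prod_cons, mul_apply,
      simpleRefl_val (hl a List.mem_cons_self), ← wordProd,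
      ih fun b hb => hl b (List.mem_cons_of_mem _ hb), applyWord_cons]

/-- Each new letter `a` of a word joins the cycles of `a` and `a + 1`, which were separated:
the earlier letters all preserve `{0, …, a}`. -/
lemma numCycles_wordProd_add_length_le {l : List ℕ} (hnd : l.Nodup) (hl : IsWord n l) :
    numCycles (wordProd n l) + l.length ≤ n + 1 := by
  induction l using List.reverseRecOn with
  | nil => simp [wordProd, numCycles_one]
  | append_singleton l a ih =>
    have ha : a < n := hl a (by simp)
    have hal : a ∉ l := fun h => List.disjoint_of_nodup_append hnd h (by simp)
    have hsplit :
        wordProd n (l ++ [a]) = wordProd n l * swap ⟨a, by omega⟩ ⟨a + 1, by omega⟩ := by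
      simp [wordProd, simpleRefl, ha]
    have hl' : IsWord n l := fun b hb => hl b (by simp [hb])
    have hsep : ¬ (wordProd n l).SameCycle ⟨a, by omega⟩ ⟨a + 1, by omega⟩ := fun h => by
      have := SameCycle.of_apply_closed (P := fun z : Fin (n + 1) => (z : ℕ) ≤ a)
        (fun z hz => by
          show (wordProd n l z : ℕ) ≤ a
          rwa [wordProd_val hl', applyWord_le_iff hal]) (le_refl a) h
      simp at this
    have := numCycles_mul_swap_add_one_le hsep
    have := ih hnd.of_append_left hl'
    rw [hsplit, List.length_append, List.length_singleton]
    omega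

variable {c : Perm (Fin (n + 1))}

lemma IsStdCox.exists_word (hc : IsStdCox n c) :
    ∃ l : List ℕ, l.Nodup ∧ (∀ a, a ∈ l ↔ a < n) ∧ l.length = n ∧ wordProd n l = c := by
  obtain ⟨l, hperm, rfl⟩ := hc
  exact ⟨l, hperm.nodup_iff.2 List.nodup_range, fun a => by simp [hperm.mem_iff],
    by simp [hperm.length_eq], rfl⟩

lemma IsStdCox.numCycles_eq_one (hc : IsStdCox n c) : numCycles c = 1 := by
  obtain ⟨l, hnd, hmem, hlen, rfl⟩ := hc.exists_word
  have := numCycles_wordProd_add_length_le hnd fun a => (hmem a).1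
  have := numCycles_pos (wordProd n l)
  omega

lemma IsStdCox.sameCycle (hc : IsStdCox n c) (p q : Fin (n + 1)) : c.SameCycle p q :=
  sameCycle_of_numCycles_eq_one hc.numCycles_eq_one p q

lemma IsStdCox.swapLength_eq (hc : IsStdCox n c) : swapLength c = n := by
  refine le_antisymm ?_ ?_
  · obtain ⟨l, -, hmem, hlen, rfl⟩ := hc.exists_word
    have hl : ∀ t ∈ l.map (simpleRefl n), IsTransposition t := by
      intro t ht
      obtain ⟨a, ha, rfl⟩ := List.mem_map.1 ht
      have ha := (hmem a).1 ha
      exact ⟨⟨a, by omega⟩, ⟨a + 1, by omega⟩, by simp [Fin.ext_iff], by simp [simpleRefl, ha]⟩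
    have := swapLength_prod_le _ hl
    rwa [List.length_map, hlen] at this
  · have := card_le_numCycles_add_swapLength c
    rw [hc.numCycles_eq_one, Fintype.card_fin] at this
    omega

lemma IsStdCox.apply_ne_self (hn : 1 ≤ n) (hc : IsStdCox n c) (z : Fin (n + 1)) : c z ≠ z :=
  fun h => by
    have := ((hc.sameCycle z 0).eq_of_left h).symm.trans
      ((hc.sameCycle z (Fin.last n)).eq_of_left h)
    simp [Fin.ext_iff] at this
    omega

lemma IsStdCox.isCycle (hn : 1 ≤ n) (hc : IsStdCox n c) : c.IsCycle :=
  ⟨0, hc.apply_ne_self hn 0, fun y _ => hc.sameCycle 0 y⟩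

lemma IsStdCox.orderOf_eq (hn : 1 ≤ n) (hc : IsStdCox n c) : orderOf c = n + 1 := by
  rw [(hc.isCycle hn).orderOf,
    Finset.eq_univ_of_forall fun z => mem_support.2 (hc.apply_ne_self hn z)]
  simp

lemma IsStdCox.pow_apply_injective (hn : 1 ≤ n) (hc : IsStdCox n c) {i j : ℕ} (hi : i < n + 1)
    (hj : j < n + 1) (h : (c ^ i) 0 = (c ^ j) 0) : i = j := by
  wlog hij : i ≤ j generalizing i j
  · exact (this hj hi h.symm (by omega)).symm
  have hfix : (c ^ (j - i)) ((c ^ i) 0) = (c ^ i) 0 := by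
    rw [← mul_apply, ← pow_add, Nat.sub_add_cancel hij, h]
  have hdvd := orderOf_dvd_of_pow_eq_one
    (((hc.isCycle hn).pow_eq_one_iff' (hc.apply_ne_self hn _)).2 hfix)
  rw [hc.orderOf_eq hn] at hdvd
  have := Nat.eq_zero_of_dvd_of_lt hdvd (by omega)
  omega

lemma IsStdCox.exists_pow_apply_eq (hn : 1 ≤ n) (hc : IsStdCox n c) (p : Fin (n + 1)) :
    ∃ m < n + 1, (c ^ m) 0 = p := by
  obtain ⟨k, hk⟩ := (hc.sameCycle 0 p).exists_nat_pow_eq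
  refine ⟨k % (n + 1), Nat.mod_lt _ (by omega), ?_⟩
  have := pow_mod_orderOf c k
  rw [hc.orderOf_eq hn] at this
  rw [this, hk]

/-- The first time the `c`-orbit of `0` reaches `p`. -/
noncomputable def orbitIndex (c : Perm (Fin (n + 1))) (p : Fin (n + 1)) : ℕ :=
  sInf {m | (c ^ m) 0 = p}

lemma pow_orbitIndex_apply (hn : 1 ≤ n) (hc : IsStdCox n c) (p : Fin (n + 1)) :
    (c ^ orbitIndex c p) 0 = p := by
  obtain ⟨m, -, hm⟩ := hc.exists_pow_apply_eq hn p
  exact Nat.sInf_mem (s := {m | (c ^ m) 0 = p}) ⟨m, hm⟩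

lemma orbitIndex_lt (hn : 1 ≤ n) (hc : IsStdCox n c) (p : Fin (n + 1)) :
    orbitIndex c p < n + 1 := by
  obtain ⟨m, hm, hmp⟩ := hc.exists_pow_apply_eq hn p
  exact (Nat.sInf_le hmp).trans_lt hm

lemma orbitIndex_eq (hn : 1 ≤ n) (hc : IsStdCox n c) {m : ℕ} {p : Fin (n + 1)} (hm : m < n + 1)
    (h : (c ^ m) 0 = p) : orbitIndex c p = m :=
  hc.pow_apply_injective hn (orbitIndex_lt hn hc p) hm (by rw [pow_orbitIndex_apply hn hc, h])

lemma orbitIndex_injective (hn : 1 ≤ n) (hc : IsStdCox n c) :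
    Function.Injective (orbitIndex c) := fun p q h => by
  rw [← pow_orbitIndex_apply hn hc p, h, pow_orbitIndex_apply hn hc q]

end CoxeterElement

section Trajectory

open Equiv Equiv.Perm

variable {n : ℕ} {c : Perm (Fin (n + 1))}

lemma IsStdCox.lt_apply_apply (hc : IsStdCox n c) {z : Fin (n + 1)} (h1 : z < c z)
    (h2 : c z ≠ Fin.last n) : c z < c (c z) := by
  obtain ⟨l, hnd, hmem, -, rfl⟩ := hc.exists_word
  have hw : IsWord n l := fun a ha => (hmem a).1 ha
  simp only [Fin.lt_def, wordProd_val hw] at h1 ⊢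
  exact applyWord_lt_applyWord_applyWord hnd hmem z.is_le h1
    fun h => h2 (Fin.ext (by simpa [wordProd_val hw] using h))

lemma IsStdCox.apply_apply_lt (hc : IsStdCox n c) {z : Fin (n + 1)} (h1 : c z < z)
    (h2 : c z ≠ 0) : c (c z) < c z := by
  obtain ⟨l, hnd, hmem, -, rfl⟩ := hc.exists_word
  have hw : IsWord n l := fun a ha => (hmem a).1 ha
  simp only [Fin.lt_def, wordProd_val hw] at h1 ⊢
  exact applyWord_applyWord_lt_applyWord hnd hmem z.is_le h1
    fun h => h2 (Fin.ext (by simpa [wordProd_val hw] using h))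

-- The `c`-orbit of `0` climbs through `R_c` up to `n`, then descends through `L_c` back to `0`.
lemma IsStdCox.strictMonoOn_pow_apply (hn : 1 ≤ n) (hc : IsStdCox n c) :
    StrictMonoOn (fun m => (c ^ m) 0) (Set.Iic (orbitIndex c (Fin.last n))) := by
  have hk := orbitIndex_lt hn hc (Fin.last n)
  have step : ∀ m, m + 1 ≤ orbitIndex c (Fin.last n) → (c ^ m) 0 < (c ^ (m + 1)) 0 := by
    intro m hm
    induction m with
    | zero => simpa [Fin.pos_iff_ne_zero] using hc.apply_ne_self hn 0
    | succ m ih =>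
      have hne : (c ^ (m + 1)) 0 ≠ Fin.last n := fun h => by
        have := orbitIndex_eq hn hc (by omega) h
        omega
      have := ih (by omega)
      rw [pow_succ' c (m + 1), mul_apply]
      rw [pow_succ' c m, mul_apply] at this hne ⊢
      exact hc.lt_apply_apply this hne
  exact strictMonoOn_of_lt_add_one Set.ordConnected_Iic fun m _ _ hm1 => step m hm1

lemma IsStdCox.strictAntiOn_pow_apply (hn : 1 ≤ n) (hc : IsStdCox n c) :
    StrictAntiOn (fun m => (c ^ m) 0) (Set.Icc (orbitIndex c (Fin.last n)) (n + 1)) := by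
  have step : ∀ m, orbitIndex c (Fin.last n) ≤ m → m ≤ n → (c ^ (m + 1)) 0 < (c ^ m) 0 := by
    intro m hkm
    induction m, hkm using Nat.le_induction with
    | base =>
      intro _
      rw [pow_succ', mul_apply, pow_orbitIndex_apply hn hc]
      exact lt_of_le_of_ne (Fin.le_last _) (hc.apply_ne_self hn _)
    | succ m hkm ih =>
      intro hm
      have hne : (c ^ (m + 1)) 0 ≠ 0 := fun h => by
        have := orbitIndex_eq hn hc (by omega) h
        have := orbitIndex_eq hn hc (m := 0) (p := 0) (by omega) rfl
        omega
      have := ih (by omega)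
      rw [pow_succ' c (m + 1), mul_apply]
      rw [pow_succ' c m, mul_apply] at this hne ⊢
      exact hc.apply_apply_lt this hne
  exact strictAntiOn_of_add_one_lt Set.ordConnected_Icc fun m _ hm hm1 =>
    step m hm.1 (by simp only [Set.mem_Icc] at hm1; omega)

lemma orbitIndex_pow_apply_le (c : Perm (Fin (n + 1))) (m : ℕ) :
    orbitIndex c ((c ^ m) 0) ≤ m :=
  Nat.sInf_le rfl

lemma mem_Rset_iff (hn : 1 ≤ n) (hc : IsStdCox n c) {p : Fin (n + 1)} :
    p ∈ Rset n c ↔ orbitIndex c p ≤ orbitIndex c (Fin.last n) := by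
  have hk0 : 0 < orbitIndex c (Fin.last n) := by
    by_contra h
    have := pow_orbitIndex_apply hn hc (Fin.last n)
    rw [show orbitIndex c (Fin.last n) = 0 by omega] at this
    simp [Fin.ext_iff] at this
    omega
  constructor
  · rintro ⟨m, rfl, hm⟩
    by_contra h
    exact hm _ hk0 ((not_le.1 h).trans_le (orbitIndex_pow_apply_le c m))
      (pow_orbitIndex_apply hn hc _)
  · intro h
    refine ⟨_, pow_orbitIndex_apply hn hc p, fun m _ hlt heq => ?_⟩
    have := orbitIndex_eq hn hc (by have := orbitIndex_lt hn hc p; omega) heq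
    omega

lemma orbitIndex_lt_orbitIndex_iff (hn : 1 ≤ n) (hc : IsStdCox n c) {p q : Fin (n + 1)}
    (hpq : p < q) : orbitIndex c p < orbitIndex c q ↔ p ∈ Rset n c := by
  rw [mem_Rset_iff hn hc]
  have hp := pow_orbitIndex_apply hn hc p
  have hq := pow_orbitIndex_apply hn hc q
  have hne : orbitIndex c p ≠ orbitIndex c q := fun h => hpq.ne (orbitIndex_injective hn hc h)
  have := orbitIndex_lt hn hc p
  have := orbitIndex_lt hn hc q
  constructor
  · intro hlt
    by_contra hk
    have := hc.strictAntiOn_pow_apply hn ⟨(not_le.1 hk).le, by omega⟩ ⟨by omega, by omega⟩ hlt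
    simp only [hp, hq] at this
    exact absurd hpq (not_lt.2 this.le)
  · intro hk
    by_contra hge
    have := hc.strictMonoOn_pow_apply hn (Set.mem_Iic.2 (by omega)) (Set.mem_Iic.2 hk)
      (by omega : orbitIndex c q < orbitIndex c p)
    simp only [hp, hq] at this
    exact absurd hpq (not_lt.2 this.le)

end Trajectory

section NoncrossingBlocks

open Equiv Equiv.Perm

variable {n : ℕ} {c x : Perm (Fin (n + 1))}

theorem isNoncrossingAlong_orbitIndex (hn : 1 ≤ n) (hc : IsStdCox n c) (hx : x ∈ NC n c) :
    IsNoncrossingAlong (orbitIndex c) x := by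
  -- relabel the points in orbit order, which turns `c` into the rotation `m ↦ m + 1`
  let g : Perm (Fin (n + 1)) := Equiv.ofBijective (fun m : Fin (n + 1) => (c ^ (m : ℕ)) 0)
    ⟨fun i j h => Fin.ext (hc.pow_apply_injective hn i.isLt j.isLt h),
      fun p => ⟨⟨orbitIndex c p, orbitIndex_lt hn hc p⟩, pow_orbitIndex_apply hn hc p⟩⟩
  have hg : ∀ p, ((g⁻¹ p : Fin (n + 1)) : ℕ) = orbitIndex c p := fun p =>
    (orbitIndex_eq hn hc (g⁻¹ p).isLt (g.apply_symm_apply p)).symm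
  have hρ : g⁻¹ * c * g = finRotate (n + 1) := by
    ext1 m
    rw [mul_apply, mul_apply, Perm.inv_eq_iff_eq]
    show c ((c ^ (m : ℕ)) 0) = (c ^ ((finRotate (n + 1) m : Fin (n + 1)) : ℕ)) 0
    rw [← mul_apply, ← pow_succ']
    rcases eq_or_ne m (Fin.last n) with rfl | hm
    · have h1 := pow_orderOf_eq_one c
      rw [hc.orderOf_eq hn] at h1
      rw [finRotate_last, Fin.val_last, h1]
      rfl
    · rw [coe_finRotate_of_ne_last hm]
  have hconj : ∀ w, swapLength (g⁻¹ * w * g) = swapLength w := fun w => by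
    simpa using swapLength_conj g⁻¹ w
  have hρall : ∀ p q, (finRotate (n + 1)).SameCycle p q := fun p q => by
    rw [← hρ, sameCycle_inv_mul_mul]
    exact hc.sameCycle _ _
  have hnc : IsNoncrossing (g⁻¹ * x * g) := by
    refine isNoncrossing_of_swapLength_add_eq (isAligned_finRotate n)
      (fun p q _ _ _ _ _ _ _ => hρall p q) ?_ ?_
    · rw [numCycles_eq_one_of_forall_sameCycle hρall, ← hρ, hconj, hc.swapLength_eq,
        Fintype.card_fin]
      omega
    · have hx' : swapLength x + swapLength (x⁻¹ * c) = swapLength c := hx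
      rw [← hρ, hconj, hconj, ← hx', ← hconj (x⁻¹ * c)]
      congr 2
      group
  exact hnc.isNoncrossingAlong_inv.of_lt_iff fun a b => by rw [Fin.lt_def, hg, hg]

end NoncrossingBlocks

section Crossing

open Equiv Equiv.Perm

variable {n : ℕ} {c x : Perm (Fin (n + 1))}

lemma orbitIndex_lt_of_mem_Rset (hn : 1 ≤ n) (hc : IsStdCox n c) {p q : Fin (n + 1)}
    (hpq : p < q) (hp : p ∈ Rset n c) : orbitIndex c p < orbitIndex c q :=
  (orbitIndex_lt_orbitIndex_iff hn hc hpq).2 hp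

lemma orbitIndex_lt_of_not_mem_Rset (hn : 1 ≤ n) (hc : IsStdCox n c) {p q : Fin (n + 1)}
    (hpq : p < q) (hp : p ∉ Rset n c) : orbitIndex c q < orbitIndex c p :=
  lt_of_le_of_ne (not_lt.1 (mt (orbitIndex_lt_orbitIndex_iff hn hc hpq).1 hp))
    fun h => hpq.ne' (orbitIndex_injective hn hc h)

lemma not_mem_Rset_of_mem_Lset {p : Fin (n + 1)} (hp : p ∈ Lset n c) (h0 : p ≠ 0)
    (hlast : p ≠ Fin.last n) : p ∉ Rset n c := by
  rcases hp with hp | hp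
  · rcases hp with rfl | rfl <;> contradiction
  · exact hp

lemma sameCycle_of_sameSide (hn : 1 ≤ n) (hc : IsStdCox n c)
    (hnc : IsNoncrossingAlong (orbitIndex c) x) {a k k' b : Fin (n + 1)} (hak : a < k)
    (hkk : k < k') (hk'b : k' < b) (hside : k ∈ Rset n c ↔ k' ∈ Rset n c)
    (hkb : x.SameCycle k b) (hak' : x.SameCycle a k') : x.SameCycle k k' := by
  refine hnc.sameCycle_of_cross hkb hak'.symm ?_ ?_
  · by_cases hk : k ∈ Rset n c
    · exact Or.inl ⟨orbitIndex_lt_of_mem_Rset hn hc hkk hk,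
        orbitIndex_lt_of_mem_Rset hn hc hk'b (hside.1 hk)⟩
    · exact Or.inr ⟨orbitIndex_lt_of_not_mem_Rset hn hc hk'b (hside.not.1 hk),
        orbitIndex_lt_of_not_mem_Rset hn hc hkk hk⟩
  · by_cases ha : a ∈ Rset n c
    · exact Or.inl ⟨orbitIndex_lt_of_mem_Rset hn hc hak ha,
        orbitIndex_lt_of_mem_Rset hn hc (hak.trans (hkk.trans hk'b)) ha⟩
    · exact Or.inr ⟨orbitIndex_lt_of_not_mem_Rset hn hc hak ha,
        orbitIndex_lt_of_not_mem_Rset hn hc (hak.trans (hkk.trans hk'b)) ha⟩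

lemma sameCycle_of_differentSides (hn : 1 ≤ n) (hc : IsStdCox n c)
    (hnc : IsNoncrossingAlong (orbitIndex c) x) {a k k' b : Fin (n + 1)} (hak : a < k)
    (hkk : k < k') (hk'b : k' < b) (hside : k ∈ Rset n c ↔ k' ∉ Rset n c)
    (hkk' : x.SameCycle k k') (hab : x.SameCycle a b) : x.SameCycle k b := by
  refine hnc.sameCycle_of_cross hkk' hab.symm ?_ ?_
  · by_cases hk : k ∈ Rset n c
    · exact Or.inl ⟨orbitIndex_lt_of_mem_Rset hn hc (hkk.trans hk'b) hk,
        orbitIndex_lt_of_not_mem_Rset hn hc hk'b (hside.1 hk)⟩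
    · exact Or.inr ⟨orbitIndex_lt_of_mem_Rset hn hc hk'b (not_not.1 (hside.not.1 hk)),
        orbitIndex_lt_of_not_mem_Rset hn hc (hkk.trans hk'b) hk⟩
  · by_cases ha : a ∈ Rset n c
    · exact Or.inl ⟨orbitIndex_lt_of_mem_Rset hn hc hak ha,
        orbitIndex_lt_of_mem_Rset hn hc (hak.trans hkk) ha⟩
    · exact Or.inr ⟨orbitIndex_lt_of_not_mem_Rset hn hc hak ha,
        orbitIndex_lt_of_not_mem_Rset hn hc (hak.trans hkk) ha⟩

end Crossing

section StandardForm

open Equiv Equiv.Perm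

variable {n : ℕ} {c x : Perm (Fin (n + 1))} {B B' : Finset (Fin (n + 1))}

lemma IsBlock.mem_iff_sameCycle (hB : IsBlock n x B) {p : Fin (n + 1)} (hp : p ∈ B)
    (q : Fin (n + 1)) : q ∈ B ↔ x.SameCycle p q := by
  obtain ⟨a, -, hmem⟩ := hB
  rw [hmem q]
  exact ⟨((hmem p).1 hp).symm.trans, ((hmem p).1 hp).trans⟩

lemma IsBlock.sameCycle (hB : IsBlock n x B) {p q : Fin (n + 1)} (hp : p ∈ B) (hq : q ∈ B) :
    x.SameCycle p q :=
  (hB.mem_iff_sameCycle hp q).1 hq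

lemma IsBlock.eq_of_sameCycle (hB : IsBlock n x B) (hB' : IsBlock n x B') {p q : Fin (n + 1)}
    (hp : p ∈ B) (hq : q ∈ B') (h : x.SameCycle p q) : B = B' := by
  ext z
  rw [hB.mem_iff_sameCycle hp, hB'.mem_iff_sameCycle hq]
  exact ⟨h.symm.trans, h.trans⟩

lemma IsBump.snd_eq {a b b' : Fin (n + 1)} (h : IsBump n a b B) (h' : IsBump n a b' B) :
    b = b' := by
  by_contra hne
  rcases lt_or_gt_of_ne hne with hlt | hlt
  · exact h'.2.2.2 b h.2.2.1 ⟨h.1, hlt⟩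
  · exact h.2.2.2 b' h'.2.2.1 ⟨h'.1, hlt⟩

lemma mem_flatten_iff_of_forall₂ {Bs : List (Finset (Fin (n + 1)))}
    {Ls : List (List (Fin (n + 1) × Fin (n + 1)))} (h : List.Forall₂ (IsDistinguished n x) Bs Ls)
    (p : Fin (n + 1) × Fin (n + 1)) : p ∈ Ls.flatten ↔ ∃ B ∈ Bs, IsBump n p.1 p.2 B := by
  induction h with
  | nil => simp
  | cons hBl _ ih => simp [(hBl.2.1 p), ih]

variable {L : List (Fin (n + 1) × Fin (n + 1))}

lemma IsStdFormData.mem_iff (hL : IsStdFormData n c x L) (p : Fin (n + 1) × Fin (n + 1)) :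
    p ∈ L ↔ ∃ B, IsBlock n x B ∧ IsBump n p.1 p.2 B := by
  obtain ⟨Bs, Ls, -, hblocks, -, hd, rfl⟩ := hL
  simp [mem_flatten_iff_of_forall₂ hd, hblocks]

lemma IsStdFormData.nodup (hL : IsStdFormData n c x L) : L.Nodup := by
  obtain ⟨Bs, Ls, hnd, hblocks, -, hd, rfl⟩ := hL
  replace hblocks : ∀ B ∈ Bs, IsBlock n x B := fun B hB => (hblocks B).1 hB
  induction hd with
  | nil => simp
  | @cons B Bs l Ls hBl hd ih =>
    rw [List.nodup_cons] at hnd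
    rw [List.flatten_cons, List.nodup_append]
    refine ⟨hBl.1, ih hnd.2 fun B' h => hblocks B' (List.mem_cons_of_mem _ h), ?_⟩
    rintro p hp q hq rfl
    obtain ⟨B', hB', hpB'⟩ := (mem_flatten_iff_of_forall₂ hd p).1 hq
    have hpB := (hBl.2.1 p).1 hp
    have := (hblocks B List.mem_cons_self).eq_of_sameCycle
      (hblocks B' (List.mem_cons_of_mem _ hB')) hpB.2.1 hpB'.2.1 SameCycle.rfl
    exact hnd.1 (this ▸ hB')

lemma count_run (i j t : ℕ) : (run i j).count t = if j ≤ t ∧ t ≤ i then 1 else 0 := by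
  have hmem : t ∈ run i j ↔ j ≤ t ∧ t ≤ i := by
    simp only [run, List.mem_map, List.mem_range]
    exact ⟨by rintro ⟨s, hs, rfl⟩; omega, fun h => ⟨i - t, by omega, by omega⟩⟩
  have hnd : (run i j).Nodup :=
    List.Nodup.map_on (fun s hs s' hs' h => by simp at hs hs'; omega) List.nodup_range
  split_ifs with h
  · exact List.count_eq_one_of_mem hnd (hmem.2 h)
  · exact List.count_eq_zero_of_not_mem (mt hmem.1 h)

lemma count_syllable (a b t : ℕ) : (syllable a b).count t =
    (if a ≤ t ∧ t ≤ b - 1 then 1 else 0) + (if a + 1 ≤ t ∧ t ≤ b - 1 then 1 else 0) := by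
  rw [syllable, List.count_append, List.count_reverse, count_run, count_run]

lemma sum_map_le_one {α : Type*} {l : List α} {f : α → ℕ} (hnd : l.Nodup)
    (h1 : ∀ p ∈ l, f p ≤ 1) (h2 : ∀ p ∈ l, ∀ q ∈ l, f p ≠ 0 → f q ≠ 0 → p = q) :
    (l.map f).sum ≤ 1 := by
  induction l with
  | nil => simp
  | cons a l ih =>
    rw [List.nodup_cons] at hnd
    rw [List.map_cons, List.sum_cons]
    by_cases ha : f a = 0
    · have := ih hnd.2 (fun p hp => h1 p (List.mem_cons_of_mem _ hp))
        fun p hp q hq => h2 p (List.mem_cons_of_mem _ hp) q (List.mem_cons_of_mem _ hq)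
      omega
    · have hzero : (l.map f).sum = 0 := List.sum_eq_zero fun y hy => by
        obtain ⟨p, hp, rfl⟩ := List.mem_map.1 hy
        by_contra hfp
        exact hnd.1 (h2 a List.mem_cons_self p (List.mem_cons_of_mem _ hp) ha hfp ▸ hp)
      have := h1 a List.mem_cons_self
      omega

end StandardForm

section Syllables

open Equiv Equiv.Perm

variable {n : ℕ} {c x : Perm (Fin (n + 1))} {B B' : Finset (Fin (n + 1))}
  {k k' a b : Fin (n + 1)}

lemma isBump_eq_of_sameSide (hn : 1 ≤ n) (hc : IsStdCox n c)
    (hnc : IsNoncrossingAlong (orbitIndex c) x)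
    (hside : (k ∈ Rset n c ∧ k' ∈ Rset n c) ∨ (k ∈ Lset n c ∧ k' ∈ Lset n c))
    (hkk' : (k' : ℕ) = k + 1) (hB : IsBlock n x B) (hkb : IsBump n k b B) (hB' : IsBlock n x B')
    (hak' : IsBump n a k' B') : a = k ∧ b = k' := by
  have hkk : k < k' := Fin.lt_def.2 (by omega)
  have hak : a ≤ k := Fin.le_def.2 (by have := Fin.lt_def.1 hak'.1; omega)
  by_cases hBB : B' = B
  · subst hBB
    obtain rfl : a = k := by
      by_contra hne
      exact hak'.2.2.2 k hkb.2.1 ⟨lt_of_le_of_ne hak hne, hkk⟩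
    exact ⟨rfl, hkb.snd_eq hak'⟩
  exfalso
  have hak : a < k := lt_of_le_of_ne hak fun h =>
    hBB (hB'.eq_of_sameCycle hB hak'.2.1 hkb.2.1 (by rw [h]))
  have hk'b : k' < b := lt_of_le_of_ne (Fin.le_def.2 (by have := Fin.lt_def.1 hkb.1; omega))
    fun h => hBB (hB'.eq_of_sameCycle hB hak'.2.2.1 hkb.2.2.1 (by rw [h]))
  have hside' : k ∈ Rset n c ↔ k' ∈ Rset n c := by
    rcases hside with ⟨h, h'⟩ | ⟨h, h'⟩
    · exact iff_of_true h h'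
    · exact iff_of_false
        (not_mem_Rset_of_mem_Lset h ((Fin.zero_le a).trans_lt hak).ne'
          (hkk.trans_le k'.le_last).ne)
        (not_mem_Rset_of_mem_Lset h' ((Fin.zero_le k).trans_lt hkk).ne'
          (hk'b.trans_le b.le_last).ne)
  have := sameCycle_of_sameSide hn hc hnc hak hkk hk'b hside'
    (hB.sameCycle hkb.2.1 hkb.2.2.1) (hB'.sameCycle hak'.2.1 hak'.2.2.1)
  exact hBB (hB'.eq_of_sameCycle hB hak'.2.2.1 hkb.2.1 this.symm)

lemma not_lt_and_lt_of_differentSides (hn : 1 ≤ n) (hc : IsStdCox n c)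
    (hnc : IsNoncrossingAlong (orbitIndex c) x)
    (hside : (k ∈ Lset n c ∧ k' ∈ Rset n c) ∨ (k ∈ Rset n c ∧ k' ∈ Lset n c))
    (hkk' : (k' : ℕ) = k + 1) (hB : IsBlock n x B) (hkk : IsBump n k k' B) (hB' : IsBlock n x B')
    (hab : IsBump n a b B') : ¬ (a < k' ∧ k' < b) := by
  rintro ⟨ha, hb⟩
  by_cases hBB : B' = B
  · subst hBB
    exact hab.2.2.2 k' hkk.2.2.1 ⟨ha, hb⟩
  have hak : a < k := lt_of_le_of_ne (Fin.le_def.2 (by have := Fin.lt_def.1 ha; omega)) fun h =>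
    hBB (hB'.eq_of_sameCycle hB hab.2.1 hkk.2.1 (by rw [h]))
  have hside' : k ∈ Rset n c ↔ k' ∉ Rset n c := by
    have hk0 := ((Fin.zero_le a).trans_lt hak).ne'
    have hk'last := (hb.trans_le b.le_last).ne
    rcases hside with ⟨h, h'⟩ | ⟨h, h'⟩
    · exact iff_of_false (not_mem_Rset_of_mem_Lset h hk0 (hkk.1.trans_le k'.le_last).ne)
        (not_not.2 h')
    · exact iff_of_true h (not_mem_Rset_of_mem_Lset h' ((Fin.zero_le k).trans_lt hkk.1).ne'
        hk'last)
  have := sameCycle_of_differentSides hn hc hnc hak hkk.1 hb hside'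
    (hB.sameCycle hkk.2.1 hkk.2.2.1) (hB'.sameCycle hab.2.1 hab.2.2.1)
  exact hBB (hB'.eq_of_sameCycle hB hab.2.2.1 hkk.2.1 this.symm)

lemma isBump_eq_of_differentSides (hn : 1 ≤ n) (hc : IsStdCox n c)
    (hnc : IsNoncrossingAlong (orbitIndex c) x)
    (hside : (k ∈ Lset n c ∧ k' ∈ Rset n c) ∨ (k ∈ Rset n c ∧ k' ∈ Lset n c))
    (hkk' : (k' : ℕ) = k + 1) (hB : IsBlock n x B) (hkk : IsBump n k k' B) (hB' : IsBlock n x B')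
    (hab : IsBump n a b B') (ha : a ≤ k) (hb : k < b) : a = k ∧ b = k' := by
  obtain rfl : b = k' := le_antisymm
    (not_lt.1 fun h => not_lt_and_lt_of_differentSides hn hc hnc hside hkk' hB hkk hB' hab
      ⟨ha.trans_lt hkk.1, h⟩)
    (Fin.le_def.2 (by have := Fin.lt_def.1 hb; omega))
  obtain rfl : B' = B := hB'.eq_of_sameCycle hB hab.2.2.1 hkk.2.2.1 SameCycle.rfl
  exact ⟨le_antisymm ha (not_lt.1 fun h => hab.2.2.2 k hkk.2.1 ⟨h, hkk.1⟩), rfl⟩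

lemma count_stdWord_le_one (hn : 1 ≤ n) (hc : IsStdCox n c)
    (hnc : IsNoncrossingAlong (orbitIndex c) x)
    (hside : (k ∈ Lset n c ∧ k' ∈ Rset n c) ∨ (k ∈ Rset n c ∧ k' ∈ Lset n c))
    (hkk' : (k' : ℕ) = k + 1) {L : List (Fin (n + 1) × Fin (n + 1))} (hL : IsStdFormData n c x L)
    (hB : IsBlock n x B) (hkk : IsBump n k k' B) : (stdWord n L).count (k' : ℕ) ≤ 1 := by
  rw [stdWord, List.count_flatten, List.map_map]
  -- `s_{k+1}` can only occur in a syllable as its center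
  have key : ∀ p ∈ L, (syllable p.1 p.2).count (k' : ℕ) ≠ 0 →
      p.1 = k' ∧ (syllable p.1 p.2).count (k' : ℕ) = 1 := by
    intro p hp hcount
    obtain ⟨B', hB', hbump⟩ := (hL.mem_iff p).1 hp
    have h12 := Fin.lt_def.1 hbump.1
    have := not_lt_and_lt_of_differentSides hn hc hnc hside hkk' hB hkk hB' hbump
    simp only [Fin.lt_def, not_and, not_lt] at this
    rw [count_syllable] at hcount ⊢
    rw [Fin.ext_iff]
    split_ifs at hcount ⊢ <;> omega
  refine sum_map_le_one hL.nodup (fun p hp => ?_) fun p hp q hq hp0 hq0 => ?_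
  · by_cases h : (syllable p.1 p.2).count (k' : ℕ) = 0
    · simp [h]
    · exact (key p hp h).2.le
  · obtain ⟨Bp, hBp, hbp⟩ := (hL.mem_iff p).1 hp
    obtain ⟨Bq, hBq, hbq⟩ := (hL.mem_iff q).1 hq
    have hp1 := (key p hp hp0).1
    have hq1 := (key q hq hq0).1
    rw [hp1] at hbp
    rw [hq1] at hbq
    obtain rfl := hBp.eq_of_sameCycle hBq hbp.2.1 hbq.2.1 SameCycle.rfl
    exact Prod.ext (hp1.trans hq1.symm) (hbp.snd_eq hbq)

end Syllables

/-- (1) if `k, k+1` both lie in `R_c` or both in `L_c`, and `s_k` is the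
center of `w_i` and at the top of `w_j`, then `i = j` and `w_i` is the single-letter
syllable `s_k`; (2) if `k` and `k+1` lie on different sides and `w_i` is the
single-letter syllable `s_k`, then `s_k` occurs only in `w_i` and `s_{k+1}` occurs at
most once in the standard form. (`k'` is the point `k+1`.) -/
theorem statement_12 (n : ℕ) (hn : 1 ≤ n) (c : Equiv.Perm (Fin (n + 1)))
    (hc : IsStdCox n c) (x : Equiv.Perm (Fin (n + 1))) (hx : x ∈ NC n c)
    (L : List (Fin (n + 1) × Fin (n + 1))) (hL : IsStdFormData n c x L)
    (k k' : Fin (n + 1)) (hkk' : (k' : ℕ) = (k : ℕ) + 1) :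
    (((k ∈ Rset n c ∧ k' ∈ Rset n c) ∨ (k ∈ Lset n c ∧ k' ∈ Lset n c)) →
      ∀ i j (hi : i < L.length) (hj : j < L.length),
        (L[i]'hi).1 = k → (L[j]'hj).2 = k' → i = j ∧ (L[i]'hi).2 = k') ∧
    (((k ∈ Lset n c ∧ k' ∈ Rset n c) ∨ (k ∈ Rset n c ∧ k' ∈ Lset n c)) →
      ∀ i (hi : i < L.length), (L[i]'hi).1 = k → (L[i]'hi).2 = k' →
        (∀ j (hj : j < L.length), j ≠ i → ¬ occursIn n (L[j]'hj) (k : ℕ)) ∧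
        (stdWord n L).count (k' : ℕ) ≤ 1) := by
  have hnc := isNoncrossingAlong_orbitIndex hn hc hx
  have hbump : ∀ i (hi : i < L.length), ∃ B, IsBlock n x B ∧ IsBump n (L[i]'hi).1 (L[i]'hi).2 B :=
    fun i hi => (hL.mem_iff _).1 (L.getElem_mem hi)
  refine ⟨fun hside i j hi hj hki hk'j => ?_,
    fun hside i hi hki hk'i => ⟨fun j hj hji hocc => ?_, ?_⟩⟩
  · obtain ⟨B, hB, hbi⟩ := hbump i hi
    obtain ⟨B', hB', hbj⟩ := hbump j hj
    rw [hki] at hbi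
    rw [hk'j] at hbj
    obtain ⟨h1, h2⟩ := isBump_eq_of_sameSide hn hc hnc hside hkk' hB hbi hB' hbj
    exact ⟨hL.nodup.getElem_inj_iff.1 (Prod.ext (hki.trans h1.symm) (h2.trans hk'j.symm)), h2⟩
  · obtain ⟨B, hB, hbi⟩ := hbump i hi
    obtain ⟨B', hB', hbj⟩ := hbump j hj
    rw [hki, hk'i] at hbi
    obtain ⟨h1, h2⟩ := isBump_eq_of_differentSides hn hc hnc hside hkk' hB hbi hB' hbj
      (Fin.le_def.2 hocc.1) (Fin.lt_def.2 hocc.2)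
    exact hji (hL.nodup.getElem_inj_iff.1 (Prod.ext (h1.trans hki.symm) (h2.trans hk'i.symm)))
  · obtain ⟨B, hB, hbi⟩ := hbump i hi
    rw [hki, hk'i] at hbi
    exact count_stdWord_le_one hn hc hnc hside hkk' hL hB hbi

end NCTL
end
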